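/- arXiv:1803.05126 — 10 statements merged into one kernel-verified Lean document; each statement's English description precedes it below -/
import Mathlib

section
/- Suppose X is differentiable on Ω, p* ∈ Ω with X(p*) = 0, the map p ↦ DX(p) is continuous at p*, and DX(p*) is invertible. Then there exists δ̄ > 0 such that for every p₀ ∈ B_δ̄(p*), the Newton sequence p_{k+1} = p_k − (DX(p_k))⁻¹ X(p_k), k = 0, 1, …, is well defined (DX(p_k) is invertible for all k), remains in B_δ̄(p*), and converges superlinearly to p*: p_k → p* and for every ε > 0 there exists K such that ‖p_{k+1} − p*‖ ≤ ε ‖p_k − p*‖ for all k ≥ K. -/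
/-- local superlinear convergence of Newton's method. If `X p* = 0`, `DX`
is continuous at `p*` and `DX p*` is invertible, then there is `δ̄ > 0` such that for
every `p₀ ∈ B_δ̄(p*)` the Newton sequence `p_{k+1} = p_k - (DX p_k)⁻¹ (X p_k)` is well
defined (each `DX p_k` is invertible), remains in `B_δ̄(p*)`, converges to `p*`, and
converges superlinearly. -/
theorem newton_method_superlinear_convergence {E : Type*} [NormedAddCommGroup E]
    [InnerProductSpace ℝ E] [FiniteDimensional ℝ E]
    (Ω : Set E) (hΩ : IsOpen Ω) (X : E → E) (DX : E → (E →L[ℝ] E))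
    (hX : ∀ q ∈ Ω, HasFDerivAt X (DX q) q)
    (pstar : E) (hpstar : pstar ∈ Ω)
    (hzero : X pstar = 0)
    (hcont : ContinuousAt DX pstar)
    (hinv : IsUnit (DX pstar)) :
    ∃ δ > 0, ∀ p₀ ∈ Metric.ball pstar δ, ∀ seq : ℕ → E, seq 0 = p₀ →
      (∀ k, seq (k + 1) = seq k - Ring.inverse (DX (seq k)) (X (seq k))) →
      (∀ k, IsUnit (DX (seq k))) ∧
      (∀ k, seq k ∈ Metric.ball pstar δ) ∧
      Filter.Tendsto seq Filter.atTop (nhds pstar) ∧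
      ∀ ε > 0, ∃ K : ℕ, ∀ k ≥ K,
        ‖seq (k + 1) - pstar‖ ≤ ε * ‖seq k - pstar‖ := by
  set C : ℝ := ‖Ring.inverse (DX pstar)‖ + 1 with hCdef
  have hC0 : (0:ℝ) < C := by positivity
  have hinvcont : ContinuousAt (fun p => Ring.inverse (DX p)) pstar := by
    have h := NormedRing.inverse_continuousAt hinv.unit
    rw [hinv.unit_spec] at h
    exact h.comp hcont
  -- Key quantitative lemma
  have key : ∀ ε : ℝ, 0 < ε → ∃ δ > 0, ∀ p ∈ Metric.ball pstar δ,
      IsUnit (DX p) ∧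
      ‖(p - Ring.inverse (DX p) (X p)) - pstar‖ ≤ ε * ‖p - pstar‖ := by
    intro ε hε
    have hc : (0:ℝ) < ε / (2 * C) := by positivity
    have h1 : ∀ᶠ p in nhds pstar, IsUnit (DX p) :=
      hcont.eventually_mem (Units.isOpen.mem_nhds hinv)
    have h2 : ∀ᶠ p in nhds pstar, ‖Ring.inverse (DX p)‖ ≤ C := by
      have hlt : ‖Ring.inverse (DX pstar)‖ < C := by
        rw [hCdef]; linarith
      have := hinvcont.norm.eventually_lt_const hlt
      exact this.mono fun p hp => le_of_lt hp
    have h3 : ∀ᶠ p in nhds pstar, ‖DX p - DX pstar‖ ≤ ε / (2 * C) := by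
      have := hcont.eventually_mem (Metric.closedBall_mem_nhds (DX pstar) hc)
      exact this.mono fun p hp => by
        rw [Metric.mem_closedBall, dist_eq_norm] at hp; exact hp
    have h4 : ∀ᶠ p in nhds pstar,
        ‖X p - X pstar - DX pstar (p - pstar)‖ ≤ ε / (2 * C) * ‖p - pstar‖ := by
      have hf := hX pstar hpstar
      exact Asymptotics.isLittleO_iff.mp hf.isLittleO hc
    have hall := (h1.and (h2.and (h3.and h4)))
    rw [Metric.eventually_nhds_iff_ball] at hall
    obtain ⟨δ, hδ, hδall⟩ := hall
    refine ⟨δ, hδ, fun p hp => ?_⟩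
    obtain ⟨hu, hb, hd, hl⟩ := hδall p hp
    refine ⟨hu, ?_⟩
    set B := Ring.inverse (DX p) with hBdef
    have hBA : ∀ v, B (DX p v) = v := by
      intro v
      have h := Ring.inverse_mul_cancel _ hu
      have h2 : (Ring.inverse (DX p) * DX p) v = (1 : E →L[ℝ] E) v := by rw [h]
      simpa [ContinuousLinearMap.mul_apply] using h2
    have hid : (p - B (X p)) - pstar =
        B ((DX p - DX pstar) (p - pstar) - (X p - X pstar - DX pstar (p - pstar))) := by
      have heq : (DX p - DX pstar) (p - pstar) - (X p - X pstar - DX pstar (p - pstar))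
          = DX p (p - pstar) - X p := by
        simp [ContinuousLinearMap.sub_apply, hzero]
      rw [heq, map_sub, hBA]
      abel
    have hval : ‖(DX p - DX pstar) (p - pstar) - (X p - X pstar - DX pstar (p - pstar))‖
        ≤ ε / (2 * C) * ‖p - pstar‖ + ε / (2 * C) * ‖p - pstar‖ := by
      refine (norm_sub_le _ _).trans ?_
      have h5 : ‖(DX p - DX pstar) (p - pstar)‖ ≤ ε / (2 * C) * ‖p - pstar‖ :=
        ((DX p - DX pstar).le_opNorm _).trans (by gcongr)
      gcongr
    calc ‖(p - B (X p)) - pstar‖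
        = ‖B ((DX p - DX pstar) (p - pstar) - (X p - X pstar - DX pstar (p - pstar)))‖ := by
          rw [hid]
      _ ≤ ‖B‖ * ‖(DX p - DX pstar) (p - pstar) - (X p - X pstar - DX pstar (p - pstar))‖ :=
          B.le_opNorm _
      _ ≤ C * (ε / (2 * C) * ‖p - pstar‖ + ε / (2 * C) * ‖p - pstar‖) :=
          mul_le_mul hb hval (norm_nonneg _) hC0.le
      _ = ε * ‖p - pstar‖ := by field_simp; ring
  obtain ⟨δ0, hδ0, hkey0⟩ := key (1/2) (by norm_num)
  refine ⟨δ0, hδ0, fun p₀ hp₀ seq h0 hrec => ?_⟩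
  have hball : ∀ k, seq k ∈ Metric.ball pstar δ0 := by
    intro k
    induction k with
    | zero => rwa [h0]
    | succ k ih =>
      obtain ⟨hu, hest⟩ := hkey0 _ ih
      rw [Metric.mem_ball, dist_eq_norm] at ih ⊢
      rw [hrec k]
      have hn : (0:ℝ) ≤ ‖seq k - pstar‖ := norm_nonneg _
      calc ‖seq k - Ring.inverse (DX (seq k)) (X (seq k)) - pstar‖
          ≤ 1/2 * ‖seq k - pstar‖ := hest
        _ < δ0 := by linarith
  have hunits : ∀ k, IsUnit (DX (seq k)) := fun k => (hkey0 _ (hball k)).1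
  have hhalf : ∀ k, ‖seq (k+1) - pstar‖ ≤ 1/2 * ‖seq k - pstar‖ := by
    intro k
    rw [hrec k]
    exact (hkey0 _ (hball k)).2
  have hdecay : ∀ k, ‖seq k - pstar‖ ≤ (1/2:ℝ)^k * ‖seq 0 - pstar‖ := by
    intro k
    induction k with
    | zero => simp
    | succ k ih =>
      calc ‖seq (k+1) - pstar‖ ≤ 1/2 * ‖seq k - pstar‖ := hhalf k
        _ ≤ 1/2 * ((1/2:ℝ)^k * ‖seq 0 - pstar‖) := by linarith
        _ = (1/2:ℝ)^(k+1) * ‖seq 0 - pstar‖ := by ring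
  have hnormtend : Filter.Tendsto (fun k => ‖seq k - pstar‖) Filter.atTop (nhds 0) := by
    have hg : Filter.Tendsto (fun k : ℕ => (1/2:ℝ)^k * ‖seq 0 - pstar‖)
        Filter.atTop (nhds 0) := by
      have := (tendsto_pow_atTop_nhds_zero_of_lt_one (by norm_num : (0:ℝ) ≤ 1/2)
        (by norm_num : (1/2:ℝ) < 1)).mul_const ‖seq 0 - pstar‖
      simpa using this
    exact squeeze_zero (fun k => norm_nonneg _) hdecay hg
  have hconv : Filter.Tendsto seq Filter.atTop (nhds pstar) := by
    rw [tendsto_iff_norm_sub_tendsto_zero]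
    exact hnormtend
  refine ⟨hunits, hball, hconv, fun ε hε => ?_⟩
  obtain ⟨δ', hδ', hkey'⟩ := key ε hε
  have hev : ∀ᶠ k in Filter.atTop, seq k ∈ Metric.ball pstar δ' :=
    hconv.eventually_mem (Metric.ball_mem_nhds _ hδ')
  obtain ⟨K, hK⟩ := Filter.eventually_atTop.mp hev
  refine ⟨K, fun k hk => ?_⟩
  rw [hrec k]
  exact (hkey' _ (hK k hk)).2
end

section
/- Suppose X is differentiable on Ω, p̄ ∈ Ω with X(p̄) = 0, the map p ↦ DX(p) is continuous at p̄, and DX(p̄) is invertible. Then there exists δ̂ > 0 such that B_δ̂(p̄) ⊆ Ω, DX(p) is invertible on B_δ̂(p̄), and lim_{p → p̄} φ(N_X(p)) / ‖X(p)‖² = 0; that is, for every ε > 0 there is δ' > 0 such that φ(N_X(p)) ≤ ε ‖X(p)‖² whenever 0 < ‖p − p̄‖ < δ'. -/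
set_option maxHeartbeats 1000000 in
/-- If `X p̄ = 0`, `DX` is continuous at `p̄` and `DX p̄` is invertible,
then there is `δ̂ > 0` with `B_δ̂(p̄) ⊆ Ω`, `DX p` invertible on the ball, and
`φ(N_X p) / ‖X p‖² → 0` as `p → p̄`, where `φ(q) = ½‖X q‖²` and
`N_X p = p - (DX p)⁻¹ (X p)`. -/
theorem merit_function_superlinear_decrease {E : Type*} [NormedAddCommGroup E]
    [InnerProductSpace ℝ E] [FiniteDimensional ℝ E]
    (Ω : Set E) (hΩ : IsOpen Ω) (X : E → E) (DX : E → (E →L[ℝ] E))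
    (hX : ∀ q ∈ Ω, HasFDerivAt X (DX q) q)
    (pbar : E) (hpbar : pbar ∈ Ω)
    (hzero : X pbar = 0)
    (hcont : ContinuousAt DX pbar)
    (hinv : IsUnit (DX pbar)) :
    ∃ δ > 0, Metric.ball pbar δ ⊆ Ω ∧
      (∀ p ∈ Metric.ball pbar δ, IsUnit (DX p)) ∧
      ∀ ε > 0, ∃ δ' > 0, ∀ p : E, 0 < ‖p - pbar‖ → ‖p - pbar‖ < δ' →
        (1 / 2 : ℝ) * ‖X (p - Ring.inverse (DX p) (X p))‖ ^ 2 ≤ ε * ‖X p‖ ^ 2 := by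
  -- a ball where `DX` is invertible and inside `Ω`
  have h1 : Ω ∩ DX ⁻¹' {A | IsUnit A} ∈ nhds pbar :=
    Filter.inter_mem (hΩ.mem_nhds hpbar)
      (hcont.preimage_mem_nhds (Units.isOpen.mem_nhds hinv))
  obtain ⟨δ₀, hδ₀pos, hδ₀⟩ := Metric.mem_nhds_iff.mp h1
  refine ⟨δ₀, hδ₀pos, fun p hp => (hδ₀ hp).1, fun p hp => (hδ₀ hp).2, ?_⟩
  -- bound on the norm of the inverse near `pbar`
  set K : ℝ := ‖Ring.inverse (DX pbar)‖ + 1 with hKdef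
  have hKpos : 0 < K := by positivity
  have hKlt : ‖Ring.inverse (DX pbar)‖ < K := by rw [hKdef]; linarith
  have invcont : ContinuousAt (fun p => Ring.inverse (DX p)) pbar := by
    have h : ContinuousAt (Ring.inverse : (E →L[ℝ] E) → (E →L[ℝ] E)) (DX pbar) :=
      hinv.unit_spec ▸ NormedRing.inverse_continuousAt hinv.unit
    exact h.comp hcont
  have h2 : ∀ᶠ p in nhds pbar, ‖Ring.inverse (DX p)‖ ≤ K := by
    have hmem : Ring.inverse (DX pbar) ∈ Metric.ball (0 : E →L[ℝ] E) K := by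
      rwa [mem_ball_zero_iff]
    filter_upwards [invcont.eventually_mem (Metric.isOpen_ball.mem_nhds hmem)] with p hp
    exact le_of_lt (mem_ball_zero_iff.mp hp)
  clear_value K
  intro ε hε
  -- choose `c` with `2 c² K² = ε`
  set c : ℝ := Real.sqrt (ε / (2 * K ^ 2)) with hcdef
  have hcpos : 0 < c := Real.sqrt_pos.mpr (by positivity)
  have hcsq : c ^ 2 = ε / (2 * K ^ 2) := Real.sq_sqrt (by positivity)
  clear_value c
  have h3 : ∀ᶠ ξ in nhds pbar, ‖DX ξ - DX pbar‖ ≤ c := by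
    filter_upwards [Metric.tendsto_nhds.mp hcont c hcpos] with ξ hξ
    rw [dist_eq_norm] at hξ; exact hξ.le
  have h4 : ∀ᶠ ξ in nhds pbar,
      ‖Ring.inverse (DX ξ)‖ ≤ K ∧ ‖DX ξ - DX pbar‖ ≤ c ∧ ξ ∈ Metric.ball pbar δ₀ := by
    filter_upwards [h2, h3, Metric.ball_mem_nhds pbar hδ₀pos] with ξ a b d
    exact ⟨a, b, d⟩
  obtain ⟨δ₁, hδ₁pos, hδ₁⟩ := Metric.eventually_nhds_iff_ball.mp h4
  set s := Metric.ball pbar δ₁ with hsdef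
  have hsΩ : s ⊆ Ω := fun x hx => (hδ₀ (hδ₁ x hx).2.2).1
  have hderiv : ∀ x ∈ s, HasFDerivWithinAt X (DX x) s x :=
    fun x hx => (hX x (hsΩ hx)).hasFDerivWithinAt
  have hbound : ∀ x ∈ s, ‖DX x - DX pbar‖ ≤ c := fun x hx => (hδ₁ x hx).2.1
  have mvt : ∀ x ∈ s, ∀ y ∈ s, ‖X y - X x - (DX pbar) (y - x)‖ ≤ c * ‖y - x‖ :=
    fun x hx y hy =>
      Convex.norm_image_sub_le_of_norm_hasFDerivWithin_le' hderiv hbound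
        (convex_ball pbar δ₁) hx hy
  have hpbar_s : pbar ∈ s := Metric.mem_ball_self hδ₁pos
  set M : ℝ := 1 + K * (c + ‖DX pbar‖) with hMdef
  have hM1 : 1 ≤ M := by
    have : 0 ≤ K * (c + ‖DX pbar‖) := by positivity
    linarith
  have hMpos : 0 < M := lt_of_lt_of_le one_pos hM1
  refine ⟨δ₁ / M, by positivity, fun p hp0 hpδ' => ?_⟩
  have hps : p ∈ s := by
    rw [hsdef, Metric.mem_ball, dist_eq_norm]
    calc ‖p - pbar‖ < δ₁ / M := hpδ'
      _ ≤ δ₁ := by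
        rw [div_le_iff₀ hMpos]; nlinarith [hδ₁pos]
  have hKp : ‖Ring.inverse (DX p)‖ ≤ K := (hδ₁ p hps).1
  have hcp : ‖DX p - DX pbar‖ ≤ c := (hδ₁ p hps).2.1
  have hup : IsUnit (DX p) := (hδ₀ (hδ₁ p hps).2.2).2
  -- ‖X p‖ ≤ (c + ‖DX pbar‖) ‖p - pbar‖
  have hXp : ‖X p‖ ≤ (c + ‖DX pbar‖) * ‖p - pbar‖ := by
    have h := mvt pbar hpbar_s p hps
    rw [hzero, sub_zero] at h
    calc ‖X p‖ = ‖(X p - (DX pbar) (p - pbar)) + (DX pbar) (p - pbar)‖ := by congr 1; abel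
      _ ≤ ‖X p - (DX pbar) (p - pbar)‖ + ‖(DX pbar) (p - pbar)‖ := norm_add_le _ _
      _ ≤ c * ‖p - pbar‖ + ‖DX pbar‖ * ‖p - pbar‖ :=
          add_le_add h ((DX pbar).le_opNorm _)
      _ = (c + ‖DX pbar‖) * ‖p - pbar‖ := by ring
  set q : E := p - Ring.inverse (DX p) (X p) with hqdef
  have hqp : ‖q - p‖ ≤ K * ‖X p‖ := by
    have : q - p = -(Ring.inverse (DX p) (X p)) := by rw [hqdef]; abel
    rw [this, norm_neg]
    calc ‖Ring.inverse (DX p) (X p)‖ ≤ ‖Ring.inverse (DX p)‖ * ‖X p‖ :=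
          (Ring.inverse (DX p)).le_opNorm _
      _ ≤ K * ‖X p‖ := mul_le_mul_of_nonneg_right hKp (norm_nonneg _)
  have hXpnn : 0 ≤ ‖X p‖ := norm_nonneg _
  have hqs : q ∈ s := by
    rw [hsdef, Metric.mem_ball, dist_eq_norm]
    calc ‖q - pbar‖ = ‖(q - p) + (p - pbar)‖ := by congr 1; abel
      _ ≤ ‖q - p‖ + ‖p - pbar‖ := norm_add_le _ _
      _ ≤ K * ((c + ‖DX pbar‖) * ‖p - pbar‖) + ‖p - pbar‖ := by
          have := hqp.trans (mul_le_mul_of_nonneg_left hXp hKpos.le)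
          linarith
      _ = M * ‖p - pbar‖ := by rw [hMdef]; ring
      _ < M * (δ₁ / M) := by exact mul_lt_mul_of_pos_left hpδ' hMpos
      _ = δ₁ := by field_simp
  -- key cancellation: DX p (q - p) = - X p
  have hcancel : (DX p) (q - p) = -(X p) := by
    have h1 : (DX p) (Ring.inverse (DX p) (X p)) = X p := by
      have := Ring.mul_inverse_cancel (DX p) hup
      calc (DX p) (Ring.inverse (DX p) (X p))
          = ((DX p) * Ring.inverse (DX p)) (X p) := rfl
        _ = X p := by rw [this]; rfl
    have h2 : q - p = -(Ring.inverse (DX p) (X p)) := by rw [hqdef]; abel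
    rw [h2, map_neg, h1]
  -- main estimate
  have hXq : ‖X q‖ ≤ 2 * c * (K * ‖X p‖) := by
    have hdec : X q = (X q - X p - (DX pbar) (q - p)) + ((DX pbar - DX p) (q - p)) := by
      rw [ContinuousLinearMap.sub_apply, hcancel]; abel
    calc ‖X q‖ ≤ ‖X q - X p - (DX pbar) (q - p)‖ + ‖(DX pbar - DX p) (q - p)‖ := by
          conv_lhs => rw [hdec]
          exact norm_add_le _ _
      _ ≤ c * ‖q - p‖ + ‖DX pbar - DX p‖ * ‖q - p‖ :=
          add_le_add (mvt p hps q hqs) ((DX pbar - DX p).le_opNorm _)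
      _ ≤ c * ‖q - p‖ + c * ‖q - p‖ := by
          have : ‖DX pbar - DX p‖ ≤ c := by rwa [norm_sub_rev] at hcp
          have hqpnn : 0 ≤ ‖q - p‖ := norm_nonneg _
          nlinarith
      _ = 2 * c * ‖q - p‖ := by ring
      _ ≤ 2 * c * (K * ‖X p‖) := by
          apply mul_le_mul_of_nonneg_left _ (by positivity)
          exact hqp.trans (le_refl _)
  have hXqnn : 0 ≤ ‖X q‖ := norm_nonneg _
  have hsq : ‖X q‖ ^ 2 ≤ (2 * c * K) ^ 2 * ‖X p‖ ^ 2 := by nlinarith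
  have h5 : c ^ 2 * (2 * K ^ 2) = ε := by
    rw [hcsq]; field_simp
  have hfinal : (1 / 2 : ℝ) * (2 * c * K) ^ 2 = ε := by linear_combination h5
  calc (1 / 2 : ℝ) * ‖X q‖ ^ 2 ≤ (1 / 2 : ℝ) * ((2 * c * K) ^ 2 * ‖X p‖ ^ 2) := by nlinarith [hsq]
    _ = ε * ‖X p‖ ^ 2 := by rw [← hfinal]; ring
end

section
/- Suppose X is differentiable on Ω, p̄ ∈ Ω with X(p̄) = 0, the map p ↦ DX(p) is continuous at p̄, and DX(p̄) is invertible. Then for every σ ∈ (0, 1/2) there exists δ > 0 such that for all p ∈ B_δ(p̄), DX(p) is invertible and the full Newton step satisfies the Armijo condition: φ(N_X(p)) ≤ φ(p) − σ ‖X(p)‖². (Here −‖X(p)‖² is the directional derivative of φ at p along the Newton direction −(DX(p))⁻¹ X(p).) -/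
/-- If `X p̄ = 0`, `DX` is continuous at `p̄` and `DX p̄` is invertible,
then for every `σ ∈ (0, 1/2)` there is `δ > 0` such that on `B_δ(p̄)` the map `DX p`
is invertible and the full Newton step satisfies the Armijo condition
`φ(N_X p) ≤ φ(p) - σ ‖X p‖²`, where `φ(q) = ½‖X q‖²` and `N_X p = p - (DX p)⁻¹ (X p)`. -/
theorem full_newton_step_armijo {E : Type*} [NormedAddCommGroup E]
    [InnerProductSpace ℝ E] [FiniteDimensional ℝ E]
    (Ω : Set E) (hΩ : IsOpen Ω) (X : E → E) (DX : E → (E →L[ℝ] E))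
    (hX : ∀ q ∈ Ω, HasFDerivAt X (DX q) q)
    (pbar : E) (hpbar : pbar ∈ Ω)
    (hzero : X pbar = 0)
    (hcont : ContinuousAt DX pbar)
    (hinv : IsUnit (DX pbar)) :
    ∀ σ : ℝ, 0 < σ → σ < 1 / 2 →
      ∃ δ > 0, ∀ p ∈ Metric.ball pbar δ, IsUnit (DX p) ∧
        (1 / 2 : ℝ) * ‖X (p - Ring.inverse (DX p) (X p))‖ ^ 2 ≤
          (1 / 2 : ℝ) * ‖X p‖ ^ 2 - σ * ‖X p‖ ^ 2 := by
  intro σ hσ0 hσ2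
  set A₀ := DX pbar with hA₀
  set B := Ring.inverse A₀ with hB
  have hC : (0:ℝ) < ‖B‖ + 1 := by positivity
  set C := ‖B‖ + 1 with hCdef
  have h12 : (0:ℝ) < 1 - 2*σ := by linarith
  set ε := (1 - 2*σ) / (2*C) with hεdef
  have hε : 0 < ε := by positivity
  -- eventually facts near pbar
  have h1 : ∀ᶠ z in nhds pbar, z ∈ Ω := hΩ.mem_nhds hpbar
  have h2 : ∀ᶠ z in nhds pbar, ‖DX z - A₀‖ ≤ ε := by
    have := hcont (Metric.closedBall_mem_nhds A₀ hε)
    filter_upwards [this] with z hz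
    simpa [dist_eq_norm] using hz
  have h3 : ∀ᶠ z in nhds pbar, IsUnit (DX z) := by
    have : {x : E →L[ℝ] E | IsUnit x} ∈ nhds A₀ := Units.isOpen.mem_nhds hinv
    exact hcont this
  have h4 : ∀ᶠ z in nhds pbar, ‖Ring.inverse (DX z)‖ ≤ C := by
    obtain ⟨u, hu⟩ := hinv
    have hcont2 : ContinuousAt (fun z => Ring.inverse (DX z)) pbar := by
      have h := NormedRing.inverse_continuousAt u
      rw [hu] at h
      exact h.comp hcont
    have := hcont2 (Metric.closedBall_mem_nhds (Ring.inverse A₀) zero_lt_one)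
    filter_upwards [this] with z hz
    have : ‖Ring.inverse (DX z) - B‖ ≤ 1 := by simpa [dist_eq_norm] using hz
    calc ‖Ring.inverse (DX z)‖ ≤ ‖B‖ + ‖Ring.inverse (DX z) - B‖ := norm_le_insert' _ _
      _ ≤ C := by rw [hCdef]; linarith
  obtain ⟨δ₁, hδ₁, hball⟩ := Metric.eventually_nhds_iff_ball.mp ((h1.and h2).and (h3.and h4))
  set M := ‖A₀‖ + ε with hM
  have hM0 : (0:ℝ) < M := by positivity
  refine ⟨δ₁ / (1 + C * M), by positivity, ?_⟩
  intro p hp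
  have hpball : p ∈ Metric.ball pbar δ₁ := by
    have : ‖p - pbar‖ < δ₁ / (1 + C * M) := by
      simpa [Metric.mem_ball, dist_eq_norm] using hp
    have h1CM : (1:ℝ) ≤ 1 + C * M := by nlinarith
    rw [Metric.mem_ball, dist_eq_norm]
    calc ‖p - pbar‖ < δ₁ / (1 + C * M) := this
      _ ≤ δ₁ := by
        rw [div_le_iff₀ (by positivity)]
        nlinarith
  obtain ⟨⟨hΩp, hDp⟩, hup, hinvp⟩ := hball _ hpball
  refine ⟨hup, ?_⟩
  -- mean value stuff on the ball
  have hconv : Convex ℝ (Metric.ball pbar δ₁) := convex_ball pbar δ₁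
  have hderiv : ∀ z ∈ Metric.ball pbar δ₁,
      HasFDerivWithinAt X (DX z) (Metric.ball pbar δ₁) z := fun z hz =>
    (hX z (hball _ hz).1.1).hasFDerivWithinAt
  have hbound : ∀ z ∈ Metric.ball pbar δ₁, ‖DX z - A₀‖ ≤ ε := fun z hz => (hball _ hz).1.2
  -- bound on ‖X p‖
  have hXp : ‖X p‖ ≤ M * ‖p - pbar‖ := by
    have hboundM : ∀ z ∈ Metric.ball pbar δ₁, ‖DX z‖ ≤ M := by
      intro z hz
      calc ‖DX z‖ ≤ ‖A₀‖ + ‖DX z - A₀‖ := norm_le_insert' _ _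
        _ ≤ M := by have := hbound z hz; rw [hM]; linarith
    have := hconv.norm_image_sub_le_of_norm_hasFDerivWithin_le hderiv hboundM
      (Metric.mem_ball_self hδ₁) hpball
    simpa [hzero] using this
  -- Newton point
  set q := p - Ring.inverse (DX p) (X p) with hq
  have hqp : ‖q - p‖ ≤ C * ‖X p‖ := by
    have : q - p = -(Ring.inverse (DX p) (X p)) := by rw [hq]; abel
    rw [this, norm_neg]
    calc ‖Ring.inverse (DX p) (X p)‖ ≤ ‖Ring.inverse (DX p)‖ * ‖X p‖ :=
          (Ring.inverse (DX p)).le_opNorm (X p)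
      _ ≤ C * ‖X p‖ := by gcongr
  have hqball : q ∈ Metric.ball pbar δ₁ := by
    have hppbar : ‖p - pbar‖ < δ₁ / (1 + C * M) := by
      simpa [Metric.mem_ball, dist_eq_norm] using hp
    rw [Metric.mem_ball, dist_eq_norm]
    have : ‖q - pbar‖ ≤ ‖q - p‖ + ‖p - pbar‖ := by
      simpa using norm_add_le (q - p) (p - pbar)
    have hCM0 : (0:ℝ) < C * M := by positivity
    calc ‖q - pbar‖ ≤ ‖q - p‖ + ‖p - pbar‖ := this
      _ ≤ C * (M * ‖p - pbar‖) + ‖p - pbar‖ := by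
          have := hqp.trans (by gcongr : C * ‖X p‖ ≤ C * (M * ‖p - pbar‖))
          linarith
      _ = (1 + C * M) * ‖p - pbar‖ := by ring
      _ < (1 + C * M) * (δ₁ / (1 + C * M)) := by
          apply mul_lt_mul_of_pos_left hppbar (by positivity)
      _ = δ₁ := by field_simp
  -- the key cancellation : X p + DX p (q - p) = 0
  have hcancel : (DX p) (q - p) = -(X p) := by
    have hqp' : q - p = -(Ring.inverse (DX p) (X p)) := by rw [hq]; abel
    rw [hqp', map_neg]
    congr 1
    have : (DX p) ((Ring.inverse (DX p)) (X p)) = ((DX p) * Ring.inverse (DX p)) (X p) := rfl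
    rw [this, Ring.mul_inverse_cancel _ hup, ContinuousLinearMap.one_apply]
  -- mean value estimate
  have hmv : ‖X q - X p - A₀ (q - p)‖ ≤ ε * ‖q - p‖ :=
    hconv.norm_image_sub_le_of_norm_hasFDerivWithin_le' hderiv hbound hpball hqball
  have hXq : ‖X q‖ ≤ (1 - 2*σ) * ‖X p‖ := by
    have hdecomp : X q = (X q - X p - A₀ (q - p)) + (A₀ - DX p) (q - p) := by
      rw [ContinuousLinearMap.sub_apply, hcancel]
      abel
    have h2nd : ‖(A₀ - DX p) (q - p)‖ ≤ ε * ‖q - p‖ := by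
      calc ‖(A₀ - DX p) (q - p)‖ ≤ ‖A₀ - DX p‖ * ‖q - p‖ := (A₀ - DX p).le_opNorm _
        _ ≤ ε * ‖q - p‖ := by
            gcongr
            rw [← norm_neg, neg_sub]
            exact hDp
    calc ‖X q‖ ≤ ‖X q - X p - A₀ (q - p)‖ + ‖(A₀ - DX p) (q - p)‖ := by
          nth_rewrite 1 [hdecomp]; exact norm_add_le _ _
      _ ≤ ε * ‖q - p‖ + ε * ‖q - p‖ := add_le_add hmv h2nd
      _ = 2 * ε * ‖q - p‖ := by ring
      _ ≤ 2 * ε * (C * ‖X p‖) := by gcongr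
      _ = (1 - 2*σ) * ‖X p‖ := by
          rw [hεdef]; field_simp
  have hXpn : (0:ℝ) ≤ ‖X p‖ := norm_nonneg _
  have hXqn : (0:ℝ) ≤ ‖X q‖ := norm_nonneg _
  set a := ‖X p‖ with ha
  set b := ‖X q‖ with hb
  have key : b ^ 2 ≤ (1 - 2*σ) * a ^ 2 := by
    have h1 : b ^ 2 ≤ ((1 - 2*σ) * a) ^ 2 := pow_le_pow_left₀ hXqn hXq 2
    have h3 : (1-2*σ)^2 ≤ 1-2*σ := by nlinarith
    have h4 : (1-2*σ)^2 * a^2 ≤ (1-2*σ) * a^2 :=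
      mul_le_mul_of_nonneg_right h3 (sq_nonneg a)
    have h2 : ((1 - 2*σ) * a) ^ 2 = (1-2*σ)^2 * a^2 := by ring
    linarith only [h1, h2.le, h2.ge, h4]
  have hexp : (1 - 2*σ) * a ^ 2 = a ^ 2 - 2*(σ * a ^ 2) := by ring
  linarith only [key, hexp.le, hexp.ge]
end

section
/- Let p ∈ Ω with X(p) ≠ 0, let σ ∈ (0, 1/2), and suppose X is differentiable at p and v ∈ E satisfies the Newton equation X(p) + DX(p) v = 0. Then there exists j ∈ ℕ such that φ(p + 2^{−j} v) ≤ φ(p) − σ 2^{−j} ‖X(p)‖²; consequently the Armijo backtracking stepsize of the damped Newton method is well defined at p. -/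
/-!
Along the Newton direction `v`, twice the merit function, `t ↦ ‖X (p + t • v)‖²`, has derivative
`2 ⟪X p, DX p v⟫ = -2 ‖X p‖²` at `t = 0`. Since `σ < 1`, this is strictly below the Armijo slope
`-2σ ‖X p‖²`, so the Armijo inequality holds for all small positive stepsizes, in particular
for `2⁻ʲ` with `j` large.
-/

open Filter Topology InnerProductSpace

theorem HasDerivAt.eventually_lt_add_mul_sub {g : ℝ → ℝ} {g' c x : ℝ}
    (hg : HasDerivAt g g' x) (hc : g' < c) :
    ∀ᶠ t in 𝓝[>] x, g t < g x + c * (t - x) := by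
  have hslope : ∀ᶠ t in 𝓝[>] x, slope g x t < c :=
    hg.hasDerivWithinAt.limsup_slope_le' (lt_irrefl x) hc
  filter_upwards [hslope, self_mem_nhdsWithin] with t ht (htx : x < t)
  rw [slope_def_field, div_lt_iff₀ (sub_pos.2 htx)] at ht
  linarith

theorem HasFDerivAt.hasDerivAt_norm_sq_comp_line {E F : Type*} [NormedAddCommGroup E]
    [NormedSpace ℝ E] [NormedAddCommGroup F] [InnerProductSpace ℝ F] {X : E → F}
    {L : E →L[ℝ] F} {p : E} (hX : HasFDerivAt X L p) (v : E) :
    HasDerivAt (fun t : ℝ => ‖X (p + t • v)‖ ^ 2) (2 * ⟪X p, L v⟫_ℝ) 0 := by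
  have hline : HasDerivAt (fun t : ℝ => p + t • v) v 0 := by
    simpa using ((hasDerivAt_id (0 : ℝ)).smul_const v).const_add p
  have hXp : HasFDerivAt X L (p + (0 : ℝ) • v) := by simpa using hX
  simpa using (hXp.comp_hasDerivAt 0 hline).norm_sq

theorem armijo_stepsize_well_defined_general {E : Type*} [NormedAddCommGroup E]
    [InnerProductSpace ℝ E]
    (X : E → E) (DX : E → (E →L[ℝ] E))
    (p : E) (hXp : X p ≠ 0)
    (σ : ℝ) (hσ1 : σ < 1 / 2)
    (hdiff : HasFDerivAt X (DX p) p)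
    (v : E) (hv : X p + DX p v = 0) :
    ∃ j : ℕ, (1 / 2 : ℝ) * ‖X (p + ((1 / 2 : ℝ) ^ j) • v)‖ ^ 2 ≤
      (1 / 2 : ℝ) * ‖X p‖ ^ 2 - σ * (1 / 2 : ℝ) ^ j * ‖X p‖ ^ 2 := by
  have hnewton : DX p v = -X p := eq_neg_of_add_eq_zero_right hv
  have hderiv := HasFDerivAt.hasDerivAt_norm_sq_comp_line hdiff v
  rw [hnewton, inner_neg_right, real_inner_self_eq_norm_sq] at hderiv
  have hslope : 2 * -‖X p‖ ^ 2 < -(2 * σ * ‖X p‖ ^ 2) := by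
    have := pow_pos (norm_pos_iff.2 hXp) 2
    nlinarith
  obtain ⟨j, hj⟩ := ((tendsto_pow_atTop_nhdsWithin_zero_of_lt_one (by norm_num : (0 : ℝ) < 1 / 2)
    (by norm_num)).eventually (hderiv.eventually_lt_add_mul_sub hslope)).exists
  refine ⟨j, ?_⟩
  simp only [zero_smul, add_zero, sub_zero] at hj
  linarith

/-- If `X p ≠ 0`, `σ ∈ (0, 1/2)`, `X` is differentiable at `p` and `v`
solves the Newton equation `X p + DX p v = 0`, then some stepsize `2⁻ʲ` satisfies the
Armijo condition `φ(p + 2⁻ʲ v) ≤ φ(p) - σ 2⁻ʲ ‖X p‖²` (with `φ(q) = ½‖X q‖²`), so the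
Armijo backtracking stepsize of the damped Newton method is well defined at `p`. -/
theorem armijo_stepsize_well_defined {E : Type*} [NormedAddCommGroup E]
    [InnerProductSpace ℝ E] [FiniteDimensional ℝ E]
    (Ω : Set E) (hΩ : IsOpen Ω) (X : E → E) (DX : E → (E →L[ℝ] E))
    (p : E) (hp : p ∈ Ω) (hXp : X p ≠ 0)
    (σ : ℝ) (hσ0 : 0 < σ) (hσ1 : σ < 1 / 2)
    (hdiff : HasFDerivAt X (DX p) p)
    (v : E) (hv : X p + DX p v = 0) :
    ∃ j : ℕ, (1 / 2 : ℝ) * ‖X (p + ((1 / 2 : ℝ) ^ j) • v)‖ ^ 2 ≤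
      (1 / 2 : ℝ) * ‖X p‖ ^ 2 - σ * (1 / 2 : ℝ) ^ j * ‖X p‖ ^ 2 :=
  armijo_stepsize_well_defined_general X DX p hXp σ hσ1 hdiff v hv
end

section
/- Let σ ∈ (0, 1/2) and let {p_k} ⊆ Ω be a damped Newton sequence: for every k, X(p_k) ≠ 0, DX(p_k) is invertible, v_k = −(DX(p_k))⁻¹ X(p_k), α_k = 2^{−j_k} where j_k is the least natural number j such that φ(p_k + 2^{−j} v_k) ≤ φ(p_k) − σ 2^{−j} ‖X(p_k)‖², and p_{k+1} = p_k + α_k v_k. Suppose p̄ ∈ Ω is an accumulation point of {p_k} (some subsequence p_{k_j} → p̄), X is differentiable on Ω, the map p ↦ DX(p) is continuous at p̄, and DX(p̄) is invertible. Then X(p̄) = 0, i.e. p̄ is a singularity of X. -/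
/-!
Suppose `X p̄ ≠ 0`. The Armijo decrease makes `‖X (p k)‖²` decreasing, with limit `‖X p̄‖² > 0`
along the subsequence, so the accepted stepsizes `α_k` tend to zero there. Hence, eventually, the
stepsize `2 α_k` was tried and rejected, i.e. the slopes of `φ = ½‖X‖²` between `p_k` and
`p_k + 2 α_k v_k` exceed `-σ ‖X (p k)‖²`. Continuity of `DX` at `p̄` makes `X`, hence `φ`, strictly
differentiable at `p̄`, so these slopes tend to `Dφ(p̄) v̄ = ⟪X p̄, DX p̄ v̄⟫ = -‖X p̄‖²`, where
`v̄ = -(DX p̄)⁻¹ (X p̄)` is the limit of the Newton directions. This gives `-‖X p̄‖² ≥ -σ ‖X p̄‖²`,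
impossible for `σ < 1`.
-/

open Filter Topology Asymptotics

theorem HasStrictFDerivAt.tendsto_inv_smul_sub {𝕜 E F : Type*} [NontriviallyNormedField 𝕜]
    [NormedAddCommGroup E] [NormedSpace 𝕜 E] [NormedAddCommGroup F] [NormedSpace 𝕜 F]
    {f : E → F} {f' : E →L[𝕜] F} {x : E} (hf : HasStrictFDerivAt f f' x)
    {ι : Type*} {l : Filter ι} {a w : ι → E} {t : ι → 𝕜} {w₀ : E}
    (ha : Tendsto a l (𝓝 x)) (ht : Tendsto t l (𝓝 0)) (ht₀ : ∀ᶠ i in l, t i ≠ 0)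
    (hw : Tendsto w l (𝓝 w₀)) :
    Tendsto (fun i => (t i)⁻¹ • (f (a i + t i • w i) - f (a i))) l (𝓝 (f' w₀)) := by
  have hpair : Tendsto (fun i => (a i + t i • w i, a i)) l (𝓝 (x, x)) := by
    refine Tendsto.prodMk_nhds ?_ ha
    simpa using ha.add (ht.smul hw)
  have hrem : (fun i => f (a i + t i • w i) - f (a i) - t i • f' (w i)) =o[l] t := by
    have ho := hf.isLittleO.comp_tendsto hpair
    simp only [Function.comp_def, add_sub_cancel_left, map_smul] at ho
    simpa using ho.trans_isBigO ((isBigO_refl t l).smul (hw.isBigO_one 𝕜))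
  have hlim := hrem.tendsto_inv_smul_nhds_zero.add ((f'.continuous.tendsto w₀).comp hw)
  rw [zero_add] at hlim
  refine hlim.congr' ?_
  filter_upwards [ht₀] with i hi
  simp [smul_sub, smul_smul, inv_mul_cancel₀ hi]

theorem HasStrictFDerivAt.half_norm_sq {E F : Type*} [NormedAddCommGroup E] [NormedSpace ℝ E]
    [NormedAddCommGroup F] [InnerProductSpace ℝ F] {f : E → F} {f' : E →L[ℝ] F} {x : E}
    (hf : HasStrictFDerivAt f f' x) :
    HasStrictFDerivAt (fun y => (1 / 2 : ℝ) * ‖f y‖ ^ 2) ((innerSL ℝ (f x)).comp f') x := by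
  refine (((hasStrictFDerivAt_norm_sq (f x)).comp x hf).const_mul (1 / 2 : ℝ)).congr_fderiv ?_
  ext w
  simp

theorem ContinuousAt.ringInverse_apply {𝕜 E α : Type*} [NontriviallyNormedField 𝕜]
    [NormedAddCommGroup E] [NormedSpace 𝕜 E] [CompleteSpace E] [TopologicalSpace α]
    {A : α → E →L[𝕜] E} {y : α → E} {x : α} (hA : ContinuousAt A x) (hy : ContinuousAt y x)
    (hx : IsUnit (A x)) : ContinuousAt (fun q => Ring.inverse (A q) (y q)) x := by
  have hinv : ContinuousAt Ring.inverse (A x) := hx.unit_spec ▸ NormedRing.inverse_continuousAt _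
  exact (hinv.comp hA).clm_apply hy

theorem ContinuousLinearMap.apply_ringInverse_apply {𝕜 E : Type*} [NontriviallyNormedField 𝕜]
    [NormedAddCommGroup E] [NormedSpace 𝕜 E] {A : E →L[𝕜] E} (hA : IsUnit A) (y : E) :
    A (Ring.inverse A y) = y :=
  congrArg (· y) (Ring.mul_inverse_cancel A hA)

theorem tendsto_zero_of_forall_add_le {f d : ℕ → ℝ} (hf : ∀ k, 0 ≤ f k) (hd : ∀ k, 0 ≤ d k)
    (hdec : ∀ k, f (k + 1) + d k ≤ f k) : Tendsto d atTop (𝓝 0) := by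
  have hanti : Antitone f := antitone_nat_of_succ_le fun k => by linarith [hdec k, hd k]
  have hlim := tendsto_atTop_ciInf hanti ⟨0, by rintro _ ⟨k, rfl⟩; exact hf k⟩
  refine squeeze_zero (g := fun k => f k - f (k + 1)) hd (fun k => by linarith [hdec k]) ?_
  simpa using hlim.sub (hlim.comp (tendsto_add_atTop_nat 1))

theorem tendsto_comp_zero_of_armijo {F : Type*} [SeminormedAddCommGroup F] {y : ℕ → F}
    {α : ℕ → ℝ} {σ : ℝ} (hσ : 0 < σ) (hα : ∀ k, 0 ≤ α k)
    (harmijo : ∀ k, (1 / 2 : ℝ) * ‖y (k + 1)‖ ^ 2 ≤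
      (1 / 2 : ℝ) * ‖y k‖ ^ 2 - σ * α k * ‖y k‖ ^ 2)
    {φs : ℕ → ℕ} (hφs : Tendsto φs atTop atTop) {z : F}
    (hy : Tendsto (y ∘ φs) atTop (𝓝 z)) (hz : ‖z‖ ≠ 0) :
    Tendsto (α ∘ φs) atTop (𝓝 0) := by
  have hdec : Tendsto (fun k => σ * α k * ‖y k‖ ^ 2) atTop (𝓝 0) :=
    tendsto_zero_of_forall_add_le (f := fun k => (1 / 2 : ℝ) * ‖y k‖ ^ 2) (fun _ => by positivity)
      (fun k => mul_nonneg (mul_nonneg hσ.le (hα k)) (sq_nonneg _))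
      (fun k => by linarith [harmijo k])
  have hnorm : Tendsto (fun n => σ * ‖y (φs n)‖ ^ 2) atTop (𝓝 (σ * ‖z‖ ^ 2)) :=
    (hy.norm.pow 2).const_mul σ
  have hquot := (hdec.comp hφs).div hnorm (by positivity)
  rw [zero_div] at hquot
  refine hquot.congr' ?_
  filter_upwards [hy.norm.eventually_ne hz] with n hn
  simp only [Pi.div_apply, Function.comp_apply] at hn ⊢
  field_simp

theorem le_slope_of_not_armijo {E F : Type*} [AddCommGroup E] [Module ℝ E] [Norm F]
    {X : E → F} {x v : E} {σ : ℝ} {m : ℕ} (hm : m ≠ 0)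
    (hrejected : ¬ ((1 / 2 : ℝ) * ‖X (x + ((1 / 2 : ℝ) ^ (m - 1)) • v)‖ ^ 2 ≤
      (1 / 2 : ℝ) * ‖X x‖ ^ 2 - σ * (1 / 2 : ℝ) ^ (m - 1) * ‖X x‖ ^ 2)) :
    -σ * ‖X x‖ ^ 2 ≤ (2 * (1 / 2 : ℝ) ^ m)⁻¹ *
      ((1 / 2 : ℝ) * ‖X (x + (2 * (1 / 2 : ℝ) ^ m) • v)‖ ^ 2 - (1 / 2 : ℝ) * ‖X x‖ ^ 2) := by
  have hpow : (1 / 2 : ℝ) ^ (m - 1) = 2 * (1 / 2) ^ m := by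
    rw [← pow_sub_one_mul hm]
    ring
  rw [hpow] at hrejected
  rw [le_inv_mul_iff₀ (by positivity)]
  linarith

theorem damped_newton_accumulation_point_is_singularity_general {E : Type*}
    [NormedAddCommGroup E] [InnerProductSpace ℝ E] [FiniteDimensional ℝ E]
    (Ω : Set E) (hΩ : IsOpen Ω) (X : E → E) (DX : E → (E →L[ℝ] E))
    (hX : ∀ q ∈ Ω, HasFDerivAt X (DX q) q)
    (σ : ℝ) (hσ0 : 0 < σ) (hσ1 : σ < 1 / 2)
    (p v : ℕ → E) (j : ℕ → ℕ)
    (hv : ∀ k, v k = -(Ring.inverse (DX (p k)) (X (p k))))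
    (harmijo : ∀ k, (1 / 2 : ℝ) * ‖X (p k + ((1 / 2 : ℝ) ^ j k) • v k)‖ ^ 2 ≤
        (1 / 2 : ℝ) * ‖X (p k)‖ ^ 2 - σ * (1 / 2 : ℝ) ^ j k * ‖X (p k)‖ ^ 2)
    (hleast : ∀ k, ∀ i < j k,
        ¬ ((1 / 2 : ℝ) * ‖X (p k + ((1 / 2 : ℝ) ^ i) • v k)‖ ^ 2 ≤
          (1 / 2 : ℝ) * ‖X (p k)‖ ^ 2 - σ * (1 / 2 : ℝ) ^ i * ‖X (p k)‖ ^ 2))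
    (hrec : ∀ k, p (k + 1) = p k + ((1 / 2 : ℝ) ^ j k) • v k)
    (pbar : E) (hpbar : pbar ∈ Ω)
    (φs : ℕ → ℕ) (hmono : StrictMono φs)
    (hacc : Filter.Tendsto (p ∘ φs) Filter.atTop (nhds pbar))
    (hcont : ContinuousAt DX pbar)
    (hinv : IsUnit (DX pbar)) :
    X pbar = 0 := by
  by_contra hX0
  have hstrict : HasStrictFDerivAt X (DX pbar) pbar :=
    hasStrictFDerivAt_of_hasFDerivAt_of_continuousAt
      (eventually_of_mem (hΩ.mem_nhds hpbar) hX) hcont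
  have hXsub : Tendsto (X ∘ p ∘ φs) atTop (𝓝 (X pbar)) := hstrict.continuousAt.tendsto.comp hacc
  have hα : Tendsto (fun n => (1 / 2 : ℝ) ^ j (φs n)) atTop (𝓝 0) :=
    tendsto_comp_zero_of_armijo (y := X ∘ p) (α := fun k => (1 / 2 : ℝ) ^ j k) hσ0
      (fun _ => by positivity) (fun k => by simpa only [Function.comp_apply, hrec] using harmijo k)
      hmono.tendsto_atTop hXsub (norm_ne_zero_iff.mpr hX0)
  have hvsub : Tendsto (v ∘ φs) atTop (𝓝 (-Ring.inverse (DX pbar) (X pbar))) := by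
    simp only [Function.comp_def, hv]
    exact (hcont.ringInverse_apply hstrict.continuousAt hinv).neg.tendsto.comp hacc
  -- the trial stepsize `2 α_k` preceding the accepted one `α_k` failed the Armijo test
  have hrejected : ∀ᶠ n in atTop, -σ * ‖X (p (φs n))‖ ^ 2 ≤ (2 * (1 / 2 : ℝ) ^ j (φs n))⁻¹ *
      ((1 / 2 : ℝ) * ‖X (p (φs n) + (2 * (1 / 2 : ℝ) ^ j (φs n)) • v (φs n))‖ ^ 2 -
        (1 / 2 : ℝ) * ‖X (p (φs n))‖ ^ 2) := by
    filter_upwards [hα.eventually (gt_mem_nhds one_pos)] with n hn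
    have hj : j (φs n) ≠ 0 := by rintro h; simp [h] at hn
    exact le_slope_of_not_armijo hj (hleast _ _ (by omega))
  have hslope := hstrict.half_norm_sq.tendsto_inv_smul_sub hacc
    (by simpa only [mul_zero] using hα.const_mul 2) (.of_forall fun _ => by positivity) hvsub
  have hle := le_of_tendsto_of_tendsto ((hXsub.norm.pow 2).const_mul (-σ)) hslope hrejected
  simp only [ContinuousLinearMap.comp_apply, map_neg, innerSL_apply_apply,
    ContinuousLinearMap.apply_ringInverse_apply hinv, real_inner_self_eq_norm_sq] at hle
  nlinarith [pow_pos (norm_pos_iff.mpr hX0) 2]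

/-- Any accumulation point `p̄` of a damped Newton sequence (Newton
directions `v k = -(DX (p k))⁻¹ (X (p k))`, Armijo backtracking stepsizes
`α k = 2^{-(j k)}` with `j k` least, update `p (k+1) = p k + α k • v k`) at which `DX`
is continuous and `DX p̄` is invertible is a singularity of `X`. -/
theorem damped_newton_accumulation_point_is_singularity {E : Type*}
    [NormedAddCommGroup E] [InnerProductSpace ℝ E] [FiniteDimensional ℝ E]
    (Ω : Set E) (hΩ : IsOpen Ω) (X : E → E) (DX : E → (E →L[ℝ] E))
    (hX : ∀ q ∈ Ω, HasFDerivAt X (DX q) q)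
    (σ : ℝ) (hσ0 : 0 < σ) (hσ1 : σ < 1 / 2)
    (p v : ℕ → E) (j : ℕ → ℕ)
    (hpΩ : ∀ k, p k ∈ Ω)
    (hXk : ∀ k, X (p k) ≠ 0)
    (hIU : ∀ k, IsUnit (DX (p k)))
    (hv : ∀ k, v k = -(Ring.inverse (DX (p k)) (X (p k))))
    (harmijo : ∀ k, (1 / 2 : ℝ) * ‖X (p k + ((1 / 2 : ℝ) ^ j k) • v k)‖ ^ 2 ≤
        (1 / 2 : ℝ) * ‖X (p k)‖ ^ 2 - σ * (1 / 2 : ℝ) ^ j k * ‖X (p k)‖ ^ 2)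
    (hleast : ∀ k, ∀ i < j k,
        ¬ ((1 / 2 : ℝ) * ‖X (p k + ((1 / 2 : ℝ) ^ i) • v k)‖ ^ 2 ≤
          (1 / 2 : ℝ) * ‖X (p k)‖ ^ 2 - σ * (1 / 2 : ℝ) ^ i * ‖X (p k)‖ ^ 2))
    (hrec : ∀ k, p (k + 1) = p k + ((1 / 2 : ℝ) ^ j k) • v k)
    (pbar : E) (hpbar : pbar ∈ Ω)
    (φs : ℕ → ℕ) (hmono : StrictMono φs)
    (hacc : Filter.Tendsto (p ∘ φs) Filter.atTop (nhds pbar))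
    (hcont : ContinuousAt DX pbar)
    (hinv : IsUnit (DX pbar)) :
    X pbar = 0 :=
  damped_newton_accumulation_point_is_singularity_general Ω hΩ X DX hX σ hσ0 hσ1 p v j hv harmijo
    hleast hrec pbar hpbar φs hmono hacc hcont hinv
end

section
/- Let σ ∈ (0, 1/2) and let {p_k} ⊆ Ω be a damped Newton sequence: for every k, X(p_k) ≠ 0, DX(p_k) is invertible, v_k = −(DX(p_k))⁻¹ X(p_k), α_k = 2^{−j_k} where j_k is the least natural number j such that φ(p_k + 2^{−j} v_k) ≤ φ(p_k) − σ 2^{−j} ‖X(p_k)‖², and p_{k+1} = p_k + α_k v_k. Suppose p̄ ∈ Ω is an accumulation point of {p_k}, X is differentiable on Ω, the map p ↦ DX(p) is continuous at p̄, and DX(p̄) is invertible. Then there exists k₀ such that α_k = 1 and p_{k+1} = p_k − (DX(p_k))⁻¹ X(p_k) for all k ≥ k₀, and the whole sequence {p_k} converges superlinearly to p̄: p_k → p̄ and for every ε > 0 there is K with ‖p_{k+1} − p̄‖ ≤ ε ‖p_k − p̄‖ for all k ≥ K. -/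
/-!
Since `‖X‖²` drops by at least `2σ αₖ ‖X pₖ‖²` at every step, `αₖ ‖X pₖ‖² → 0`. If `X p̄ ≠ 0`,
the stepsizes along the subsequence converging to `p̄` tend to zero, hence so do the last rejected
trial steps `2αₖ`. As `DX` is continuous at `p̄`, `X` is strictly differentiable there, so the
difference quotients of `‖X‖²` along these rejected steps tend to its derivative
`-2‖X p̄‖²` in the limiting Newton direction; rejection forces this to be `≥ -2σ‖X p̄‖²`, which
is impossible for `σ < 1`. So `X p̄ = 0`.

Near a zero with invertible derivative the Newton map `N` satisfies `N q - p̄ = o(q - p̄)`, hence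
`X (N q) = o(X q)`. For `σ < 1/2` the full step therefore passes the Armijo test and does not
increase the distance to `p̄`, so every small ball around `p̄` is invariant. The accumulation
point then attracts the whole sequence, which eventually performs pure Newton steps and converges
superlinearly.
-/

open Filter Topology Asymptotics

theorem ContinuousAt.ringInverse {α R : Type*} [TopologicalSpace α] [NormedRing R]
    [CompleteSpace R] {f : α → R} {x : α} (hf : ContinuousAt f x) (hx : IsUnit (f x)) :
    ContinuousAt (fun y => Ring.inverse (f y)) x := by
  have h := NormedRing.inverse_continuousAt hx.unit
  rw [IsUnit.unit_spec] at h
  exact h.comp hf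

theorem HasStrictFDerivAt.tendsto_slope_comp {𝕜 E F ι : Type*} [NontriviallyNormedField 𝕜]
    [NormedAddCommGroup E] [NormedSpace 𝕜 E] [NormedAddCommGroup F] [NormedSpace 𝕜 F]
    {f : E → F} {f' : E →L[𝕜] F} {x : E} (hf : HasStrictFDerivAt f f' x)
    {l : Filter ι} {q w : ι → E} {t : ι → 𝕜} {w₀ : E}
    (hq : Tendsto q l (𝓝 x)) (hw : Tendsto w l (𝓝 w₀)) (ht : Tendsto t l (𝓝[≠] 0)) :
    Tendsto (fun i => (t i)⁻¹ • (f (q i + t i • w i) - f (q i))) l (𝓝 (f' w₀)) := by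
  have ht0 : Tendsto t l (𝓝 0) := (tendsto_nhdsWithin_iff.1 ht).1
  have ht_ne : ∀ᶠ i in l, t i ≠ 0 := (tendsto_nhdsWithin_iff.1 ht).2
  have hpair : Tendsto (fun i => (q i + t i • w i, q i)) l (𝓝 (x, x)) := by
    simpa using (hq.add (ht0.smul hw)).prodMk_nhds hq
  have hrem : (fun i => f (q i + t i • w i) - f (q i) - f' (t i • w i)) =o[l]
      (fun i => t i • w i) := by
    refine (hf.isLittleO.comp_tendsto hpair).congr (fun i => ?_) (fun i => ?_) <;> simp
  have hsmall : (fun i => (t i)⁻¹ • (f (q i + t i • w i) - f (q i) - f' (t i • w i))) =o[l]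
      (fun _ => (1 : ℝ)) := by
    refine ((isBigO_refl (fun i => (t i)⁻¹) l).smul_isLittleO hrem).trans_isBigO ?_
    refine IsBigO.trans (EventuallyEq.isBigO ?_) (hw.isBigO_one ℝ)
    filter_upwards [ht_ne] with i hi
    rw [smul_smul, inv_mul_cancel₀ hi, one_smul]
  have hlim := ((isLittleO_one_iff ℝ).1 hsmall).add (f'.continuous.tendsto w₀ |>.comp hw)
  rw [zero_add] at hlim
  refine hlim.congr' ?_
  filter_upwards [ht_ne] with i hi
  simp [smul_sub, smul_smul, inv_mul_cancel₀ hi]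

theorem summable_of_succ_add_le {ψ a : ℕ → ℝ} (hψ : ∀ k, 0 ≤ ψ k) (ha : ∀ k, 0 ≤ a k)
    (h : ∀ k, ψ (k + 1) + a k ≤ ψ k) : Summable a := by
  have htel : ∀ n, ∑ i ∈ Finset.range n, a i + ψ n ≤ ψ 0 := by
    intro n
    induction n with
    | zero => simp
    | succ n ih => rw [Finset.sum_range_succ]; linarith [h n]
  exact summable_of_sum_range_le ha fun n => by linarith [htel n, hψ n]

theorem tendsto_of_mapClusterPt_of_dist_succ_le {M : Type*} [PseudoMetricSpace M] {p : ℕ → M}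
    {x : M} {r : ℝ} (hr : 0 < r)
    (hstep : ∀ k, dist (p k) x < r → dist (p (k + 1)) x ≤ dist (p k) x)
    (hx : MapClusterPt x atTop p) : Tendsto p atTop (𝓝 x) := by
  refine Metric.tendsto_atTop.2 fun ε hε => ?_
  obtain ⟨N, hN⟩ := (hx.frequently (Metric.ball_mem_nhds x (lt_min hε hr))).exists
  refine ⟨N, fun n hn => ?_⟩
  suffices dist (p n) x < min ε r from this.trans_le (min_le_left _ _)
  induction n, hn using Nat.le_induction with
  | base => exact hN
  | succ n _ ih => exact (hstep n (ih.trans_le (min_le_right _ _))).trans_lt ih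

section Newton

variable {𝕜 E : Type*} [NontriviallyNormedField 𝕜] [NormedAddCommGroup E] [NormedSpace 𝕜 E]

theorem ContinuousLinearMap.ringInverse_apply_self {A : E →L[𝕜] E} (hA : IsUnit A) (w : E) :
    Ring.inverse A (A w) = w := by
  change (Ring.inverse A * A) w = w
  rw [Ring.inverse_mul_cancel A hA, one_apply_eq_self]

theorem ContinuousLinearMap.self_apply_ringInverse {A : E →L[𝕜] E} (hA : IsUnit A) (w : E) :
    A (Ring.inverse A w) = w := by
  change (A * Ring.inverse A) w = w
  rw [Ring.mul_inverse_cancel A hA, one_apply_eq_self]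

noncomputable def newtonStep (X : E → E) (DX : E → E →L[𝕜] E) (q : E) : E :=
  q - Ring.inverse (DX q) (X q)

variable [CompleteSpace E] {X : E → E} {DX : E → E →L[𝕜] E} {x : E}

theorem isLittleO_newtonStep_sub (hX : HasFDerivAt X (DX x) x) (hX0 : X x = 0)
    (hcont : ContinuousAt DX x) (hinv : IsUnit (DX x)) :
    (fun q => newtonStep X DX q - x) =o[𝓝 x] (fun q => q - x) := by
  have hlin : (fun q => (DX q - DX x) (q - x)) =o[𝓝 x] (fun q => q - x) := by
    have hsmall : (fun q => DX q - DX x) =o[𝓝 x] (fun _ => (1 : ℝ)) :=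
      (isLittleO_one_iff ℝ).2 (tendsto_sub_nhds_zero_iff.2 hcont)
    simpa using isBoundedBilinearMap_apply.isBigO_comp.trans_isLittleO
      (hsmall.norm_left.mul_isBigO (isBigO_refl (fun q => q - x) _).norm_norm)
  have hres : (fun q => DX q (q - x) - X q) =o[𝓝 x] (fun q => q - x) := by
    refine (hlin.sub hX.isLittleO).congr_left fun q => ?_
    simp only [sub_apply, hX0, sub_zero]
    abel
  have hinv_bdd : (fun q => Ring.inverse (DX q)) =O[𝓝 x] (fun _ => (1 : ℝ)) :=
    (hcont.ringInverse hinv).tendsto.isBigO_one ℝ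
  have h := isBoundedBilinearMap_apply.isBigO_comp.trans_isLittleO
    (hinv_bdd.norm_left.mul_isLittleO hres.norm_norm)
  simp only [one_mul, isLittleO_norm_right] at h
  refine h.congr' ?_ EventuallyEq.rfl
  filter_upwards [hcont.eventually (Units.isOpen.mem_nhds hinv)] with q hq
  simp only [newtonStep, map_sub, ContinuousLinearMap.ringInverse_apply_self hq]
  abel

theorem isLittleO_comp_newtonStep (hX : HasFDerivAt X (DX x) x) (hX0 : X x = 0)
    (hcont : ContinuousAt DX x) (hinv : IsUnit (DX x)) :
    (fun q => X (newtonStep X DX q)) =o[𝓝 x] X := by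
  have hN := isLittleO_newtonStep_sub hX hX0 hcont hinv
  have hN_tendsto : Tendsto (newtonStep X DX) (𝓝 x) (𝓝 x) :=
    tendsto_sub_nhds_zero_iff.1 (hN.trans_tendsto (tendsto_sub_nhds_zero_iff.2 tendsto_id))
  have hX_le : X =O[𝓝 x] (fun q => q - x) := by simpa [hX0] using hX.isBigO_sub
  -- `q - x = A⁻¹ (A (q - x))` and `A (q - x) = X q + o(q - x)`
  have hX_ge : (fun q => q - x) =O[𝓝 x] X := by
    have hA : (fun q => q - x) =O[𝓝 x] (fun q => DX x (q - x)) :=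
      ((Ring.inverse (DX x)).isBigO_comp (fun q => DX x (q - x)) (𝓝 x)).congr_left
        fun q => ContinuousLinearMap.ringInverse_apply_self hinv _
    have h := (hX.isLittleO.trans_isBigO hA).right_isBigO_add
    simp only [hX0, sub_zero, sub_add_cancel] at h
    exact hA.trans h
  exact ((hX_le.comp_tendsto hN_tendsto).trans_isLittleO hN).trans_isBigO hX_ge

end Newton

section Armijo

variable {E F : Type*} [NormedAddCommGroup E] [NormedSpace ℝ E] [NormedAddCommGroup F]

def ArmijoCondition (X : E → F) (σ t : ℝ) (q w : E) : Prop :=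
  (1 / 2 : ℝ) * ‖X (q + t • w)‖ ^ 2 ≤ (1 / 2 : ℝ) * ‖X q‖ ^ 2 - σ * t * ‖X q‖ ^ 2

theorem tendsto_stepsize_mul_sq_norm_of_armijo {X : E → F} {σ : ℝ} (hσ : 0 < σ)
    {p v : ℕ → E} {α : ℕ → ℝ} (hα : ∀ k, 0 ≤ α k)
    (harmijo : ∀ k, ArmijoCondition X σ (α k) (p k) (v k))
    (hrec : ∀ k, p (k + 1) = p k + α k • v k) :
    Tendsto (fun k => α k * ‖X (p k)‖ ^ 2) atTop (𝓝 0) := by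
  have hdecr : ∀ k, ‖X (p (k + 1))‖ ^ 2 + 2 * σ * (α k * ‖X (p k)‖ ^ 2) ≤ ‖X (p k)‖ ^ 2 := by
    intro k
    have h := harmijo k
    rw [ArmijoCondition, ← hrec k] at h
    linarith
  have hsum := summable_of_succ_add_le (ψ := fun k => ‖X (p k)‖ ^ 2)
    (fun k => by positivity) (fun k => by have := hα k; positivity) hdecr
  simpa [← mul_assoc, hσ.ne'] using hsum.tendsto_atTop_zero.const_mul (2 * σ)⁻¹

end Armijo

section DampedNewton

variable {E : Type*} [NormedAddCommGroup E] [InnerProductSpace ℝ E]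
  {X : E → E} {DX : E → E →L[ℝ] E} {x : E} {σ : ℝ}

theorem eq_zero_of_tendsto_of_not_armijo {A : E →L[ℝ] E} {w₀ : E}
    (hX : HasStrictFDerivAt X A x) (hAw : A w₀ = -X x) (hσ : σ < 1)
    {ι : Type*} {l : Filter ι} [l.NeBot] {q w : ι → E} {t : ι → ℝ}
    (hq : Tendsto q l (𝓝 x)) (hw : Tendsto w l (𝓝 w₀)) (ht : Tendsto t l (𝓝[>] 0))
    (hfail : ∀ᶠ i in l, ¬ ArmijoCondition X σ (t i) (q i) (w i)) : X x = 0 := by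
  have hslope := (hX.inner ℝ hX).tendsto_slope_comp hq hw (ht.mono_right (nhdsGT_le_nhdsNE 0))
  simp only [ContinuousLinearMap.comp_apply, ContinuousLinearMap.prod_apply,
    fderivInnerCLM_apply, hAw, inner_neg_left, inner_neg_right, real_inner_self_eq_norm_sq,
    smul_eq_mul] at hslope
  have hbound : Tendsto (fun i => -(2 * σ) * ‖X (q i)‖ ^ 2) l (𝓝 (-(2 * σ) * ‖X x‖ ^ 2)) :=
    ((hX.hasFDerivAt.continuousAt.tendsto.comp hq).norm.pow 2).const_mul _
  have hle := le_of_tendsto_of_tendsto hbound hslope <| by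
    filter_upwards [hfail, tendsto_nhdsWithin_iff.1 ht |>.2] with i hi hti
    rw [ArmijoCondition, not_le] at hi
    rw [le_inv_mul_iff₀ (Set.mem_Ioi.1 hti)]
    linarith
  have hsq : ‖X x‖ ^ 2 ≤ 0 := by nlinarith
  simpa using hsq

theorem eventually_armijoCondition_newtonStep [CompleteSpace E] (hX : HasFDerivAt X (DX x) x)
    (hX0 : X x = 0) (hcont : ContinuousAt DX x) (hinv : IsUnit (DX x)) (hσ0 : 0 ≤ σ)
    (hσ1 : σ < 1 / 2) :
    ∀ᶠ q in 𝓝 x, ArmijoCondition X σ 1 q (-Ring.inverse (DX q) (X q)) := by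
  filter_upwards [(isLittleO_comp_newtonStep hX hX0 hcont hinv).bound (c := 1 - 2 * σ)
    (by linarith)] with q hq
  rw [ArmijoCondition, one_smul, ← sub_eq_add_neg]
  have hsq : ‖X (newtonStep X DX q)‖ ^ 2 ≤ ((1 - 2 * σ) * ‖X q‖) ^ 2 :=
    pow_le_pow_left₀ (norm_nonneg _) hq 2
  rw [newtonStep] at hsq
  nlinarith [mul_nonneg (mul_nonneg (by linarith : (0 : ℝ) ≤ 1 - 2 * σ) hσ0) (sq_nonneg ‖X q‖)]

structure IsDampedNewtonSeq (X : E → E) (DX : E → E →L[ℝ] E) (σ : ℝ) (p v : ℕ → E)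
    (j : ℕ → ℕ) : Prop where
  direction_eq : ∀ k, v k = -Ring.inverse (DX (p k)) (X (p k))
  armijo : ∀ k, ArmijoCondition X σ ((1 / 2 : ℝ) ^ j k) (p k) (v k)
  not_armijo_of_lt : ∀ k, ∀ i < j k, ¬ ArmijoCondition X σ ((1 / 2 : ℝ) ^ i) (p k) (v k)
  succ_eq : ∀ k, p (k + 1) = p k + (1 / 2 : ℝ) ^ j k • v k

namespace IsDampedNewtonSeq

variable {p v : ℕ → E} {j : ℕ → ℕ} (hd : IsDampedNewtonSeq X DX σ p v j)
include hd

theorem full_step_of_armijo {k : ℕ}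
    (h : ArmijoCondition X σ 1 (p k) (-Ring.inverse (DX (p k)) (X (p k)))) :
    j k = 0 ∧ p (k + 1) = newtonStep X DX (p k) := by
  rw [← hd.direction_eq] at h
  have hj : j k = 0 := by
    by_contra hk
    exact hd.not_armijo_of_lt k 0 (Nat.pos_of_ne_zero hk) (by simpa using h)
  refine ⟨hj, ?_⟩
  rw [hd.succ_eq, hj, hd.direction_eq, pow_zero, one_smul, newtonStep, sub_eq_add_neg]

theorem apply_eq_zero_of_tendsto_subseq [CompleteSpace E]
    (hX : ∀ᶠ y in 𝓝 x, HasFDerivAt X (DX y) y) (hcont : ContinuousAt DX x)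
    (hinv : IsUnit (DX x)) (hσ0 : 0 < σ) (hσ1 : σ < 1)
    {φ : ℕ → ℕ} (hφ : StrictMono φ) (hacc : Tendsto (p ∘ φ) atTop (𝓝 x)) : X x = 0 := by
  by_contra hne
  have hc : 0 < ‖X x‖ ^ 2 := pow_pos (norm_pos_iff.2 hne) 2
  have hXφ : Tendsto (fun m => ‖X (p (φ m))‖ ^ 2) atTop (𝓝 (‖X x‖ ^ 2)) :=
    (hX.self_of_nhds.continuousAt.tendsto.comp hacc).norm.pow 2
  have hα : Tendsto (fun m => (1 / 2 : ℝ) ^ j (φ m)) atTop (𝓝 0) := by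
    have h := (tendsto_stepsize_mul_sq_norm_of_armijo (α := fun k => (1 / 2 : ℝ) ^ j k) hσ0
      (fun k => by positivity) hd.armijo hd.succ_eq |>.comp hφ.tendsto_atTop).div hXφ hc.ne'
    rw [zero_div] at h
    refine h.congr' ?_
    filter_upwards [hXφ.eventually_ne hc.ne'] with m hm
    exact mul_div_cancel_right₀ _ hm
  have hj : ∀ᶠ m in atTop, j (φ m) ≠ 0 := by
    filter_upwards [hα.eventually_ne one_ne_zero.symm] with m hm hj
    simp [hj] at hm
  -- the last rejected trial step, twice the accepted one
  have ht : Tendsto (fun m => (1 / 2 : ℝ) ^ (j (φ m) - 1)) atTop (𝓝[>] 0) := by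
    refine tendsto_nhdsWithin_iff.2
      ⟨?_, Eventually.of_forall fun m => Set.mem_Ioi.2 (by positivity)⟩
    have h2α : Tendsto (fun m => 2 * (1 / 2 : ℝ) ^ j (φ m)) atTop (𝓝 0) := by
      simpa using hα.const_mul 2
    refine h2α.congr' (hj.mono fun m hm => ?_)
    obtain ⟨n, hn⟩ := Nat.exists_eq_succ_of_ne_zero hm
    change 2 * (1 / 2 : ℝ) ^ j (φ m) = (1 / 2) ^ (j (φ m) - 1)
    rw [hn, Nat.succ_sub_one, pow_succ]
    ring
  have hv : Tendsto (v ∘ φ) atTop (𝓝 (-Ring.inverse (DX x) (X x))) := by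
    have hdir : ContinuousAt (fun q => -Ring.inverse (DX q) (X q)) x :=
      ((hcont.ringInverse hinv).clm_apply hX.self_of_nhds.continuousAt).neg
    exact (hdir.tendsto.comp hacc).congr fun m => (hd.direction_eq _).symm
  exact hne <| eq_zero_of_tendsto_of_not_armijo
    (hasStrictFDerivAt_of_hasFDerivAt_of_continuousAt hX hcont)
    (by simp [ContinuousLinearMap.self_apply_ringInverse hinv]) hσ1 hacc hv ht
    (hj.mono fun m hm => hd.not_armijo_of_lt _ _ (by omega))

end IsDampedNewtonSeq

end DampedNewton

theorem damped_newton_global_superlinear_convergence_general {E : Type*}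
    [NormedAddCommGroup E] [InnerProductSpace ℝ E] [FiniteDimensional ℝ E]
    (Ω : Set E) (hΩ : IsOpen Ω) (X : E → E) (DX : E → (E →L[ℝ] E))
    (hX : ∀ q ∈ Ω, HasFDerivAt X (DX q) q)
    (σ : ℝ) (hσ0 : 0 < σ) (hσ1 : σ < 1 / 2)
    (p v : ℕ → E) (j : ℕ → ℕ)
    (hv : ∀ k, v k = -(Ring.inverse (DX (p k)) (X (p k))))
    (harmijo : ∀ k, (1 / 2 : ℝ) * ‖X (p k + ((1 / 2 : ℝ) ^ j k) • v k)‖ ^ 2 ≤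
        (1 / 2 : ℝ) * ‖X (p k)‖ ^ 2 - σ * (1 / 2 : ℝ) ^ j k * ‖X (p k)‖ ^ 2)
    (hleast : ∀ k, ∀ i < j k,
        ¬ ((1 / 2 : ℝ) * ‖X (p k + ((1 / 2 : ℝ) ^ i) • v k)‖ ^ 2 ≤
          (1 / 2 : ℝ) * ‖X (p k)‖ ^ 2 - σ * (1 / 2 : ℝ) ^ i * ‖X (p k)‖ ^ 2))
    (hrec : ∀ k, p (k + 1) = p k + ((1 / 2 : ℝ) ^ j k) • v k)
    (pbar : E) (hpbar : pbar ∈ Ω)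
    (φs : ℕ → ℕ) (hmono : StrictMono φs)
    (hacc : Filter.Tendsto (p ∘ φs) Filter.atTop (nhds pbar))
    (hcont : ContinuousAt DX pbar)
    (hinv : IsUnit (DX pbar)) :
    (∃ k₀ : ℕ, ∀ k ≥ k₀, (1 / 2 : ℝ) ^ j k = 1 ∧
        p (k + 1) = p k - Ring.inverse (DX (p k)) (X (p k))) ∧
      Filter.Tendsto p Filter.atTop (nhds pbar) ∧
      ∀ ε > 0, ∃ K : ℕ, ∀ k ≥ K, ‖p (k + 1) - pbar‖ ≤ ε * ‖p k - pbar‖ := by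
  have hd : IsDampedNewtonSeq X DX σ p v j := ⟨hv, harmijo, hleast, hrec⟩
  have hXnear : ∀ᶠ q in 𝓝 pbar, HasFDerivAt X (DX q) q :=
    eventually_of_mem (hΩ.mem_nhds hpbar) hX
  have hX0 : X pbar = 0 :=
    hd.apply_eq_zero_of_tendsto_subseq hXnear hcont hinv hσ0 (by linarith) hmono hacc
  have hN := isLittleO_newtonStep_sub hXnear.self_of_nhds hX0 hcont hinv
  have hgood : ∀ᶠ q in 𝓝 pbar, ArmijoCondition X σ 1 q (-Ring.inverse (DX q) (X q)) ∧
      ‖newtonStep X DX q - pbar‖ ≤ ‖q - pbar‖ :=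
    (eventually_armijoCondition_newtonStep hXnear.self_of_nhds hX0 hcont hinv hσ0.le hσ1).and
      (by simpa using hN.bound one_pos)
  obtain ⟨r, hr, hball⟩ := Metric.eventually_nhds_iff.1 hgood
  have hp : Tendsto p atTop (𝓝 pbar) := by
    refine tendsto_of_mapClusterPt_of_dist_succ_le hr (fun k hk => ?_)
      (MapClusterPt.of_comp hmono.tendsto_atTop hacc.mapClusterPt)
    rw [(hd.full_step_of_armijo (hball hk).1).2, dist_eq_norm, dist_eq_norm]
    exact (hball hk).2
  have hfull := (hp.eventually hgood).mono fun k hk => hd.full_step_of_armijo hk.1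
  refine ⟨?_, hp, fun ε hε => ?_⟩
  · obtain ⟨k₀, hk₀⟩ := eventually_atTop.1 hfull
    exact ⟨k₀, fun k hk => ⟨by rw [(hk₀ k hk).1, pow_zero], (hk₀ k hk).2⟩⟩
  · obtain ⟨K, hK⟩ := eventually_atTop.1 (hfull.and (hp.eventually (hN.bound hε)))
    exact ⟨K, fun k hk => (hK k hk).1.2 ▸ (hK k hk).2⟩

/-- If a damped Newton sequence has an accumulation point `p̄` at which
`DX` is continuous and `DX p̄` is invertible, then eventually the stepsize is `α k = 1`
(full Newton steps `p (k+1) = p k - (DX (p k))⁻¹ (X (p k))`), and the whole sequence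
converges superlinearly to `p̄`. -/
theorem damped_newton_global_superlinear_convergence {E : Type*}
    [NormedAddCommGroup E] [InnerProductSpace ℝ E] [FiniteDimensional ℝ E]
    (Ω : Set E) (hΩ : IsOpen Ω) (X : E → E) (DX : E → (E →L[ℝ] E))
    (hX : ∀ q ∈ Ω, HasFDerivAt X (DX q) q)
    (σ : ℝ) (hσ0 : 0 < σ) (hσ1 : σ < 1 / 2)
    (p v : ℕ → E) (j : ℕ → ℕ)
    (hpΩ : ∀ k, p k ∈ Ω)
    (hXk : ∀ k, X (p k) ≠ 0)
    (hIU : ∀ k, IsUnit (DX (p k)))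
    (hv : ∀ k, v k = -(Ring.inverse (DX (p k)) (X (p k))))
    (harmijo : ∀ k, (1 / 2 : ℝ) * ‖X (p k + ((1 / 2 : ℝ) ^ j k) • v k)‖ ^ 2 ≤
        (1 / 2 : ℝ) * ‖X (p k)‖ ^ 2 - σ * (1 / 2 : ℝ) ^ j k * ‖X (p k)‖ ^ 2)
    (hleast : ∀ k, ∀ i < j k,
        ¬ ((1 / 2 : ℝ) * ‖X (p k + ((1 / 2 : ℝ) ^ i) • v k)‖ ^ 2 ≤
          (1 / 2 : ℝ) * ‖X (p k)‖ ^ 2 - σ * (1 / 2 : ℝ) ^ i * ‖X (p k)‖ ^ 2))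
    (hrec : ∀ k, p (k + 1) = p k + ((1 / 2 : ℝ) ^ j k) • v k)
    (pbar : E) (hpbar : pbar ∈ Ω)
    (φs : ℕ → ℕ) (hmono : StrictMono φs)
    (hacc : Filter.Tendsto (p ∘ φs) Filter.atTop (nhds pbar))
    (hcont : ContinuousAt DX pbar)
    (hinv : IsUnit (DX pbar)) :
    (∃ k₀ : ℕ, ∀ k ≥ k₀, (1 / 2 : ℝ) ^ j k = 1 ∧
        p (k + 1) = p k - Ring.inverse (DX (p k)) (X (p k))) ∧
      Filter.Tendsto p Filter.atTop (nhds pbar) ∧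
      ∀ ε > 0, ∃ K : ℕ, ∀ k ≥ K, ‖p (k + 1) - pbar‖ ≤ ε * ‖p k - pbar‖ :=
  damped_newton_global_superlinear_convergence_general Ω hΩ X DX hX σ hσ0 hσ1 p v j hv harmijo
    hleast hrec pbar hpbar φs hmono hacc hcont hinv
end

section
/- Let σ ∈ (0, 1/2) and let {p_k} ⊆ Ω be a damped Newton sequence: for every k, X(p_k) ≠ 0, DX(p_k) is invertible, v_k = −(DX(p_k))⁻¹ X(p_k), α_k = 2^{−j_k} where j_k is the least natural number j such that φ(p_k + 2^{−j} v_k) ≤ φ(p_k) − σ 2^{−j} ‖X(p_k)‖², and p_{k+1} = p_k + α_k v_k. Suppose p̄ ∈ Ω is an accumulation point of {p_k}, X is continuously differentiable on Ω, DX(p̄) is invertible, and DX is locally Lipschitz at p̄, i.e. there are L > 0 and δ_L > 0 with ‖DX(p) − DX(p̄)‖ ≤ L ‖p − p̄‖ for all p ∈ B_{δ_L}(p̄). Then {p_k} converges quadratically to p̄: p_k → p̄ and there exist C > 0 and k₀ such that ‖p_{k+1} − p̄‖ ≤ C ‖p_k − p̄‖² for all k ≥ k₀. -/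
/-!
Let `M` bound `‖DX⁻¹‖` near `p̄` and shrink the ball around `p̄` until `DX` oscillates on it by at
most `(1 - 2σ) / M`. By the mean value inequality, the Newton direction `v = -DX(q)⁻¹ X(q)` then
satisfies `‖X(q + t v)‖ ≤ (1 - 2σt) ‖X(q)‖`, hence passes the Armijo test, for every `t ≤ 1` such
that the step stays in the ball. Along the subsequence converging to `p̄` the step sizes are thus
bounded below, while `σ αₖ ‖X(pₖ)‖² ≤ φ(pₖ) - φ(pₖ₊₁) → 0` because `φ(pₖ)` decreases; so
`X(p̄) = 0`. Once an iterate lies in the ball, the Newton error estimate shows that the full step is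
accepted, contracts the distance to `p̄` by `1 - 2σ`, and, by the Lipschitz bound on `DX`, squares
it up to the factor `2ML`.
-/

open Metric Filter Topology

theorem Antitone.tendsto_sub_succ {f : ℕ → ℝ} (hf : Antitone f) (hb : BddBelow (Set.range f)) :
    Tendsto (fun k => f k - f (k + 1)) atTop (𝓝 0) := by
  have h := tendsto_atTop_ciInf hf hb
  simpa using h.sub (h.comp (tendsto_add_atTop_nat 1))

theorem tendsto_of_dist_succ_le_mul {α : Type*} [PseudoMetricSpace α] {u : ℕ → α} {a : α}
    {r c : ℝ} (hc0 : 0 ≤ c) (hc1 : c < 1)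
    (hu : ∀ k, u k ∈ ball a r → dist (u (k + 1)) a ≤ c * dist (u k) a) {N : ℕ}
    (hN : u N ∈ ball a r) : (∀ k ≥ N, u k ∈ ball a r) ∧ Tendsto u atTop (𝓝 a) := by
  have hdecay : ∀ m, u (N + m) ∈ ball a r ∧ dist (u (N + m)) a ≤ c ^ m * dist (u N) a := by
    intro m
    induction m with
    | zero => simpa using hN
    | succ m ih =>
      have hstep := hu _ ih.1
      have hle : dist (u (N + m + 1)) a ≤ dist (u (N + m)) a := by
        nlinarith [dist_nonneg (x := u (N + m)) (y := a)]
      refine ⟨mem_ball.2 (hle.trans_lt ih.1), hstep.trans ?_⟩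
      rw [pow_succ', mul_assoc]
      exact mul_le_mul_of_nonneg_left ih.2 hc0
  refine ⟨fun k hk => ?_, ?_⟩
  · obtain ⟨m, rfl⟩ := Nat.exists_eq_add_of_le hk
    exact (hdecay m).1
  · rw [← tendsto_add_atTop_iff_nat N, tendsto_iff_dist_tendsto_zero]
    have hlim := (tendsto_pow_atTop_nhds_zero_of_lt_one hc0 hc1).mul_const (dist (u N) a)
    rw [zero_mul] at hlim
    exact squeeze_zero (fun _ => dist_nonneg) (fun m => by rw [add_comm]; exact (hdecay m).2) hlim

section Newton

variable {E : Type*} [NormedAddCommGroup E] [NormedSpace ℝ E]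

noncomputable def newtonDir (X : E → E) (DX : E → E →L[ℝ] E) (q : E) : E :=
  -Ring.inverse (DX q) (X q)

def ArmijoAt (X : E → E) (σ : ℝ) (q v : E) (t : ℝ) : Prop :=
  (1 / 2 : ℝ) * ‖X (q + t • v)‖ ^ 2 ≤ (1 / 2 : ℝ) * ‖X q‖ ^ 2 - σ * t * ‖X q‖ ^ 2

structure IsNewtonBall (X : E → E) (DX : E → E →L[ℝ] E) (σ : ℝ) (z : E) (r M : ℝ) : Prop where
  pos : 0 < M
  hasFDerivAt : ∀ q ∈ ball z r, HasFDerivAt X (DX q) q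
  norm_inverse_le : ∀ q ∈ ball z r, ‖Ring.inverse (DX q)‖ ≤ M
  norm_sub_le : ∀ q ∈ ball z r, ∀ ξ ∈ ball z r, ‖DX ξ - DX q‖ ≤ (1 - 2 * σ) / M

structure IsDampedNewtonSeq_s12 (X : E → E) (DX : E → E →L[ℝ] E) (σ : ℝ) (p v : ℕ → E)
    (j : ℕ → ℕ) : Prop where
  isUnit : ∀ k, IsUnit (DX (p k))
  dir_eq : ∀ k, v k = newtonDir X DX (p k)
  armijoAt : ∀ k, ArmijoAt X σ (p k) (v k) ((1 / 2) ^ j k)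
  not_armijoAt : ∀ k, ∀ i < j k, ¬ ArmijoAt X σ (p k) (v k) ((1 / 2) ^ i)
  succ_eq : ∀ k, p (k + 1) = p k + ((1 / 2 : ℝ) ^ j k) • v k

variable {X : E → E} {DX : E → E →L[ℝ] E} {q : E}

theorem apply_newtonDir (hq : IsUnit (DX q)) : DX q (newtonDir X DX q) = -X q := by
  rw [newtonDir, map_neg, neg_inj]
  show (DX q * Ring.inverse (DX q)) (X q) = X q
  rw [Ring.mul_inverse_cancel _ hq]
  rfl

theorem norm_newtonDir_le : ‖newtonDir X DX q‖ ≤ ‖Ring.inverse (DX q)‖ * ‖X q‖ := by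
  rw [newtonDir, norm_neg]
  exact (Ring.inverse (DX q)).le_opNorm _

theorem norm_add_newtonDir_sub_le {s : Set E} (hs : Convex ℝ s)
    (hX : ∀ ξ ∈ s, HasFDerivAt X (DX ξ) ξ) {z : E} (hq : q ∈ s) (hz : z ∈ s) (hXz : X z = 0)
    (hunit : IsUnit (DX q)) {c : ℝ} (hc : ∀ ξ ∈ s, ‖DX ξ - DX q‖ ≤ c) :
    ‖q + newtonDir X DX q - z‖ ≤ ‖Ring.inverse (DX q)‖ * (c * ‖q - z‖) := by
  have hmvt : ‖X z - X q - DX q (z - q)‖ ≤ c * ‖z - q‖ :=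
    hs.norm_image_sub_le_of_norm_hasFDerivWithin_le' (fun ξ hξ => (hX ξ hξ).hasFDerivWithinAt)
      hc hq hz
  have hid : q + newtonDir X DX q - z = Ring.inverse (DX q) (X z - X q - DX q (z - q)) := by
    have hinv : Ring.inverse (DX q) (DX q (z - q)) = z - q := by
      show (Ring.inverse (DX q) * DX q) (z - q) = z - q
      rw [Ring.inverse_mul_cancel _ hunit]
      rfl
    rw [newtonDir, hXz, map_sub, map_sub, hinv, map_zero]
    abel
  rw [hid, norm_sub_rev q]
  exact ((Ring.inverse (DX q)).le_opNorm _).trans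
    (mul_le_mul_of_nonneg_left hmvt (norm_nonneg _))

theorem armijoAt_newtonDir {s : Set E} (hs : Convex ℝ s)
    (hX : ∀ ξ ∈ s, HasFDerivAt X (DX ξ) ξ) {σ t c : ℝ} (hq : q ∈ s)
    (hqt : q + t • newtonDir X DX q ∈ s) (hunit : IsUnit (DX q))
    (hc : ∀ ξ ∈ s, ‖DX ξ - DX q‖ ≤ c) (hcσ : c * ‖Ring.inverse (DX q)‖ ≤ 1 - 2 * σ)
    (hσ : 0 ≤ σ) (ht0 : 0 ≤ t) (ht1 : t ≤ 1) :
    ArmijoAt X σ q (newtonDir X DX q) t := by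
  set v := newtonDir X DX q
  have hc0 : 0 ≤ c := (norm_nonneg _).trans (hc q hq)
  have hmvt : ‖X (q + t • v) - X q - DX q (t • v)‖ ≤ c * ‖t • v‖ := by
    simpa using hs.norm_image_sub_le_of_norm_hasFDerivWithin_le'
      (fun ξ hξ => (hX ξ hξ).hasFDerivWithinAt) hc hq hqt
  have hcv : c * ‖v‖ ≤ (1 - 2 * σ) * ‖X q‖ :=
    calc c * ‖v‖ ≤ c * (‖Ring.inverse (DX q)‖ * ‖X q‖) :=
          mul_le_mul_of_nonneg_left norm_newtonDir_le hc0
      _ ≤ (1 - 2 * σ) * ‖X q‖ := by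
          rw [← mul_assoc]; exact mul_le_mul_of_nonneg_right hcσ (norm_nonneg _)
  -- the linearization of `X` along the Newton direction is `(1 - t) • X q`
  have hlin : X (q + t • v) = (X (q + t • v) - X q - DX q (t • v)) + (1 - t) • X q := by
    rw [map_smul, apply_newtonDir hunit, sub_smul, one_smul, smul_neg]
    abel
  have hbound : ‖X (q + t • v)‖ ≤ (1 - 2 * σ * t) * ‖X q‖ := by
    rw [hlin]
    refine (norm_add_le _ _).trans ?_
    rw [norm_smul, Real.norm_of_nonneg (sub_nonneg.2 ht1)]
    rw [norm_smul, Real.norm_of_nonneg ht0] at hmvt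
    nlinarith [mul_le_mul_of_nonneg_left hcv ht0]
  have hσt : 0 ≤ σ * t := mul_nonneg hσ ht0
  have hpos : 0 ≤ (1 - 2 * σ * t) * ‖X q‖ := (norm_nonneg _).trans hbound
  unfold ArmijoAt
  nlinarith [norm_nonneg (X (q + t • v)), norm_nonneg (X q),
    mul_nonneg (mul_nonneg hpos (norm_nonneg (X q))) hσt]

namespace IsNewtonBall

variable {σ r M : ℝ} {z : E}

theorem armijoAt (hB : IsNewtonBall X DX σ z r M) (hσ : 0 ≤ σ) (hq : q ∈ ball z r)
    (hunit : IsUnit (DX q)) {t : ℝ} (ht0 : 0 ≤ t) (ht1 : t ≤ 1)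
    (hqt : q + t • newtonDir X DX q ∈ ball z r) : ArmijoAt X σ q (newtonDir X DX q) t := by
  have hη : 0 ≤ (1 - 2 * σ) / M := (norm_nonneg _).trans (hB.norm_sub_le q hq q hq)
  refine armijoAt_newtonDir (convex_ball z r) hB.hasFDerivAt hq hqt hunit (hB.norm_sub_le q hq)
    ?_ hσ ht0 ht1
  calc (1 - 2 * σ) / M * ‖Ring.inverse (DX q)‖ ≤ (1 - 2 * σ) / M * M :=
        mul_le_mul_of_nonneg_left (hB.norm_inverse_le q hq) hη
    _ = 1 - 2 * σ := div_mul_cancel₀ _ hB.pos.ne'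

theorem norm_add_newtonDir_sub_le (hB : IsNewtonBall X DX σ z r M) (hq : q ∈ ball z r)
    (hXz : X z = 0) (hunit : IsUnit (DX q)) :
    ‖q + newtonDir X DX q - z‖ ≤ (1 - 2 * σ) * ‖q - z‖ := by
  have hη : 0 ≤ (1 - 2 * σ) / M := (norm_nonneg _).trans (hB.norm_sub_le q hq q hq)
  calc ‖q + newtonDir X DX q - z‖ ≤ ‖Ring.inverse (DX q)‖ * ((1 - 2 * σ) / M * ‖q - z‖) :=
        _root_.norm_add_newtonDir_sub_le (convex_ball z r) hB.hasFDerivAt hq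
          (mem_ball_self (pos_of_mem_ball hq)) hXz hunit (hB.norm_sub_le q hq)
    _ ≤ M * ((1 - 2 * σ) / M * ‖q - z‖) :=
        mul_le_mul_of_nonneg_right (hB.norm_inverse_le q hq) (by positivity)
    _ = (1 - 2 * σ) * ‖q - z‖ := by field_simp [hB.pos.ne']

theorem norm_add_newtonDir_sub_le_sq (hB : IsNewtonBall X DX σ z r M) {L : ℝ} (hL : 0 ≤ L)
    (hLip : ∀ ξ ∈ ball z r, ‖DX ξ - DX z‖ ≤ L * ‖ξ - z‖) (hq : q ∈ ball z r) (hXz : X z = 0)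
    (hunit : IsUnit (DX q)) :
    ‖q + newtonDir X DX q - z‖ ≤ 2 * M * L * ‖q - z‖ ^ 2 := by
  set d := ‖q - z‖
  have hsub : closedBall z d ⊆ ball z r := closedBall_subset_ball (mem_ball_iff_norm.mp hq)
  have hq' : q ∈ closedBall z d := mem_closedBall_iff_norm.mpr le_rfl
  have hosc : ∀ ξ ∈ closedBall z d, ‖DX ξ - DX q‖ ≤ 2 * L * d := fun ξ hξ =>
    calc ‖DX ξ - DX q‖ ≤ ‖DX ξ - DX z‖ + ‖DX q - DX z‖ := by
          rw [norm_sub_rev (DX q)]; exact norm_sub_le_norm_sub_add_norm_sub _ _ _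
      _ ≤ L * d + L * d := add_le_add
          ((hLip ξ (hsub hξ)).trans (mul_le_mul_of_nonneg_left (mem_closedBall_iff_norm.mp hξ) hL))
          (hLip q hq)
      _ = 2 * L * d := by ring
  calc ‖q + newtonDir X DX q - z‖ ≤ ‖Ring.inverse (DX q)‖ * (2 * L * d * d) :=
        _root_.norm_add_newtonDir_sub_le (convex_closedBall z d)
          (fun ξ hξ => hB.hasFDerivAt ξ (hsub hξ)) hq'
          (mem_closedBall_self (norm_nonneg _)) hXz hunit hosc
    _ ≤ M * (2 * L * d * d) :=
        mul_le_mul_of_nonneg_right (hB.norm_inverse_le q hq) (by positivity)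
    _ = 2 * M * L * d ^ 2 := by ring

end IsNewtonBall

theorem exists_isNewtonBall [CompleteSpace E] {z : E} (hX : ∀ᶠ q in 𝓝 z, HasFDerivAt X (DX q) q)
    (hDX : ContinuousAt DX z) (hz : IsUnit (DX z)) {σ : ℝ} (hσ : σ < 1 / 2) {δ : ℝ}
    (hδ : 0 < δ) : ∃ M r, 0 < r ∧ r ≤ δ ∧ IsNewtonBall X DX σ z r M := by
  set M := ‖Ring.inverse (DX z)‖ + 1
  have hM : 0 < M := by positivity
  have hη : 0 < (1 - 2 * σ) / M / 2 := by
    have : 0 < 1 - 2 * σ := by linarith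
    positivity
  have hinv : ∀ᶠ q in 𝓝 z, ‖Ring.inverse (DX q)‖ < M := by
    have hcont := NormedRing.inverse_continuousAt hz.unit
    rw [hz.unit_spec] at hcont
    exact ((hcont.comp hDX).norm.tendsto).eventually_lt_const (lt_add_one _)
  have hosc : ∀ᶠ q in 𝓝 z, ‖DX q - DX z‖ < (1 - 2 * σ) / M / 2 :=
    (tendsto_iff_norm_sub_tendsto_zero.mp hDX).eventually_lt_const hη
  obtain ⟨ε, hε, hball⟩ := eventually_nhds_iff_ball.mp (hX.and (hinv.and hosc))
  have hball' : ∀ q ∈ ball z (min ε δ), HasFDerivAt X (DX q) q ∧ ‖Ring.inverse (DX q)‖ < M ∧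
      ‖DX q - DX z‖ < (1 - 2 * σ) / M / 2 :=
    fun q hq => hball q (ball_subset_ball (min_le_left _ _) hq)
  refine ⟨M, min ε δ, lt_min hε hδ, min_le_right _ _, hM, fun q hq => (hball' q hq).1,
    fun q hq => (hball' q hq).2.1.le, fun q hq ξ hξ => ?_⟩
  calc ‖DX ξ - DX q‖ ≤ ‖DX ξ - DX z‖ + ‖DX q - DX z‖ := by
        rw [norm_sub_rev (DX q)]; exact norm_sub_le_norm_sub_add_norm_sub _ _ _
    _ ≤ (1 - 2 * σ) / M := by linarith [(hball' ξ hξ).2.2, (hball' q hq).2.2]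

namespace IsDampedNewtonSeq_s12

variable {σ : ℝ} {p v : ℕ → E} {j : ℕ → ℕ}

theorem norm_sq_succ_le (h : IsDampedNewtonSeq_s12 X DX σ p v j) (k : ℕ) :
    ‖X (p (k + 1))‖ ^ 2 ≤ ‖X (p k)‖ ^ 2 - 2 * σ * (1 / 2) ^ j k * ‖X (p k)‖ ^ 2 := by
  have := h.armijoAt k
  rw [ArmijoAt, ← h.succ_eq] at this
  linarith

theorem antitone_norm_sq (h : IsDampedNewtonSeq_s12 X DX σ p v j) (hσ : 0 ≤ σ) :
    Antitone fun k => ‖X (p k)‖ ^ 2 :=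
  antitone_nat_of_succ_le fun k => (h.norm_sq_succ_le k).trans (sub_le_self _ (by positivity))

theorem norm_le_norm_zero (h : IsDampedNewtonSeq_s12 X DX σ p v j) (hσ : 0 ≤ σ) (k : ℕ) :
    ‖X (p k)‖ ≤ ‖X (p 0)‖ :=
  (pow_le_pow_iff_left₀ (norm_nonneg _) (norm_nonneg _) two_ne_zero).mp
    (h.antitone_norm_sq hσ (Nat.zero_le k))

theorem le_of_armijoAt (h : IsDampedNewtonSeq_s12 X DX σ p v j) {k i : ℕ}
    (hi : ArmijoAt X σ (p k) (v k) ((1 / 2) ^ i)) : j k ≤ i :=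
  not_lt.mp fun hlt => h.not_armijoAt k i hlt hi

variable {z : E} {r M : ℝ}

theorem exists_forall_le_of_mem_ball (h : IsDampedNewtonSeq_s12 X DX σ p v j) (hσ : 0 ≤ σ)
    (hB : IsNewtonBall X DX σ z r M) (hr : 0 < r) :
    ∃ i, ∀ k, p k ∈ ball z (r / 2) → j k ≤ i := by
  obtain ⟨i, hi⟩ : ∃ i : ℕ, (1 / 2 : ℝ) ^ i * (M * ‖X (p 0)‖) < r / 2 := by
    have hlim := (tendsto_pow_atTop_nhds_zero_of_lt_one (by norm_num : (0 : ℝ) ≤ 1 / 2)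
      (by norm_num)).mul_const (M * ‖X (p 0)‖)
    rw [zero_mul] at hlim
    exact (hlim.eventually_lt_const (half_pos hr)).exists
  refine ⟨i, fun k hk => h.le_of_armijoAt ?_⟩
  have hk' : p k ∈ ball z r := ball_subset_ball (half_le_self hr.le) hk
  have hv : ‖v k‖ ≤ M * ‖X (p 0)‖ := by
    rw [h.dir_eq]
    exact norm_newtonDir_le.trans (mul_le_mul (hB.norm_inverse_le _ hk')
      (h.norm_le_norm_zero hσ k) (norm_nonneg _) hB.pos.le)
  have hmem : p k + (1 / 2 : ℝ) ^ i • v k ∈ ball z r := by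
    rw [mem_ball_iff_norm, add_sub_right_comm]
    calc ‖p k - z + (1 / 2 : ℝ) ^ i • v k‖ ≤ ‖p k - z‖ + (1 / 2 : ℝ) ^ i * ‖v k‖ := by
          rw [← norm_smul_of_nonneg (by positivity)]; exact norm_add_le _ _
      _ < r / 2 + r / 2 := add_lt_add_of_lt_of_le (mem_ball_iff_norm.mp hk)
          ((mul_le_mul_of_nonneg_left hv (by positivity)).trans hi.le)
      _ = r := add_halves r
  rw [h.dir_eq] at hmem ⊢
  exact hB.armijoAt hσ hk' (h.isUnit k) (by positivity) (pow_le_one₀ (by norm_num) (by norm_num))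
    hmem

theorem apply_eq_zero_of_tendsto (h : IsDampedNewtonSeq_s12 X DX σ p v j) (hσ : 0 < σ)
    (hB : IsNewtonBall X DX σ z r M) (hr : 0 < r) {φs : ℕ → ℕ} (hφs : StrictMono φs)
    (hacc : Tendsto (p ∘ φs) atTop (𝓝 z)) : X z = 0 := by
  obtain ⟨i, hi⟩ := h.exists_forall_le_of_mem_ball hσ.le hB hr
  have hdec : Tendsto (fun n => ‖X (p (φs n))‖ ^ 2 - ‖X (p (φs n + 1))‖ ^ 2) atTop (𝓝 0) :=
    ((h.antitone_norm_sq hσ.le).tendsto_sub_succ ⟨0, by rintro _ ⟨k, rfl⟩; positivity⟩).comp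
      hφs.tendsto_atTop
  have hlim0 : Tendsto (fun n => ‖X (p (φs n))‖ ^ 2) atTop (𝓝 0) := by
    have hc : 0 < 2 * σ * (1 / 2 : ℝ) ^ i := by positivity
    have := hdec.div_const (2 * σ * (1 / 2 : ℝ) ^ i)
    rw [zero_div] at this
    refine squeeze_zero' (.of_forall fun n => by positivity) ?_ this
    filter_upwards [hacc.eventually (ball_mem_nhds z (half_pos hr))] with n hn
    rw [le_div_iff₀ hc]
    have hstep : (1 / 2 : ℝ) ^ i ≤ (1 / 2) ^ j (φs n) :=
      pow_le_pow_of_le_one (by norm_num) (by norm_num) (hi _ hn)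
    nlinarith [h.norm_sq_succ_le (φs n),
      mul_le_mul_of_nonneg_left hstep (by positivity : 0 ≤ 2 * σ * ‖X (p (φs n))‖ ^ 2)]
  have hlim : Tendsto (fun n => ‖X (p (φs n))‖ ^ 2) atTop (𝓝 (‖X z‖ ^ 2)) :=
    (((hB.hasFDerivAt z (mem_ball_self hr)).continuousAt.tendsto.comp hacc).norm).pow 2
  simpa using tendsto_nhds_unique hlim hlim0

theorem succ_eq_add_newtonDir (h : IsDampedNewtonSeq_s12 X DX σ p v j) (hσ : 0 ≤ σ)
    (hB : IsNewtonBall X DX σ z r M) (hXz : X z = 0) {k : ℕ} (hk : p k ∈ ball z r) :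
    p (k + 1) = p k + newtonDir X DX (p k) := by
  have hnewton := hB.norm_add_newtonDir_sub_le hk hXz (h.isUnit k)
  have hmem : p k + (1 : ℝ) • newtonDir X DX (p k) ∈ ball z r := by
    rw [one_smul, mem_ball_iff_norm]
    nlinarith [mem_ball_iff_norm.mp hk, norm_nonneg (p k - z)]
  have hj : j k = 0 := Nat.le_zero.mp <| h.le_of_armijoAt <| by
    rw [h.dir_eq, pow_zero]
    exact hB.armijoAt hσ hk (h.isUnit k) zero_le_one le_rfl hmem
  rw [h.succ_eq, hj, pow_zero, one_smul, h.dir_eq]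

end IsDampedNewtonSeq_s12

end Newton

theorem damped_newton_global_quadratic_convergence_general {E : Type*}
    [NormedAddCommGroup E] [InnerProductSpace ℝ E] [FiniteDimensional ℝ E]
    (Ω : Set E) (hΩ : IsOpen Ω) (X : E → E) (DX : E → (E →L[ℝ] E))
    (hX : ∀ q ∈ Ω, HasFDerivAt X (DX q) q)
    (hC1 : ContinuousOn DX Ω)
    (σ : ℝ) (hσ0 : 0 < σ) (hσ1 : σ < 1 / 2)
    (p v : ℕ → E) (j : ℕ → ℕ)
    (hIU : ∀ k, IsUnit (DX (p k)))
    (hv : ∀ k, v k = -(Ring.inverse (DX (p k)) (X (p k))))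
    (harmijo : ∀ k, (1 / 2 : ℝ) * ‖X (p k + ((1 / 2 : ℝ) ^ j k) • v k)‖ ^ 2 ≤
        (1 / 2 : ℝ) * ‖X (p k)‖ ^ 2 - σ * (1 / 2 : ℝ) ^ j k * ‖X (p k)‖ ^ 2)
    (hleast : ∀ k, ∀ i < j k,
        ¬ ((1 / 2 : ℝ) * ‖X (p k + ((1 / 2 : ℝ) ^ i) • v k)‖ ^ 2 ≤
          (1 / 2 : ℝ) * ‖X (p k)‖ ^ 2 - σ * (1 / 2 : ℝ) ^ i * ‖X (p k)‖ ^ 2))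
    (hrec : ∀ k, p (k + 1) = p k + ((1 / 2 : ℝ) ^ j k) • v k)
    (pbar : E) (hpbar : pbar ∈ Ω)
    (φs : ℕ → ℕ) (hmono : StrictMono φs)
    (hacc : Filter.Tendsto (p ∘ φs) Filter.atTop (nhds pbar))
    (hinv : IsUnit (DX pbar))
    (L : ℝ) (hL : 0 < L) (δL : ℝ) (hδL : 0 < δL)
    (hLip : ∀ q ∈ Metric.ball pbar δL, ‖DX q - DX pbar‖ ≤ L * ‖q - pbar‖) :
    Filter.Tendsto p Filter.atTop (nhds pbar) ∧
      ∃ C > 0, ∃ k₀ : ℕ, ∀ k ≥ k₀, ‖p (k + 1) - pbar‖ ≤ C * ‖p k - pbar‖ ^ 2 := by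
  have hseq : IsDampedNewtonSeq_s12 X DX σ p v j := ⟨hIU, hv, harmijo, hleast, hrec⟩
  have hΩpbar : Ω ∈ 𝓝 pbar := hΩ.mem_nhds hpbar
  obtain ⟨M, r, hr, hrδ, hB⟩ := exists_isNewtonBall (eventually_of_mem hΩpbar hX)
    (hC1.continuousAt hΩpbar) hinv hσ1 hδL
  have hX0 : X pbar = 0 := hseq.apply_eq_zero_of_tendsto hσ0 hB hr hmono hacc
  have hstep : ∀ k, p k ∈ ball pbar r → ‖p (k + 1) - pbar‖ ≤ (1 - 2 * σ) * ‖p k - pbar‖ ∧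
      ‖p (k + 1) - pbar‖ ≤ 2 * M * L * ‖p k - pbar‖ ^ 2 := fun k hk => by
    rw [hseq.succ_eq_add_newtonDir hσ0.le hB hX0 hk]
    exact ⟨hB.norm_add_newtonDir_sub_le hk hX0 (hIU k), hB.norm_add_newtonDir_sub_le_sq hL.le
      (fun q hq => hLip q (ball_subset_ball hrδ hq)) hk hX0 (hIU k)⟩
  obtain ⟨N, hN⟩ := (hacc.eventually (ball_mem_nhds pbar hr)).exists
  obtain ⟨hball, hlim⟩ := tendsto_of_dist_succ_le_mul (u := p) (c := 1 - 2 * σ) (by linarith)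
    (by linarith) (fun k hk => by simpa only [dist_eq_norm] using (hstep k hk).1) hN
  exact ⟨hlim, 2 * M * L, by have := hB.pos; positivity, φs N,
    fun k hk => (hstep k (hball k hk)).2⟩

/-- If a damped Newton sequence has an accumulation point `p̄`, `X` is
continuously differentiable, `DX p̄` is invertible and `DX` is locally Lipschitz at
`p̄`, then the sequence converges quadratically to `p̄`. -/
theorem damped_newton_global_quadratic_convergence {E : Type*}
    [NormedAddCommGroup E] [InnerProductSpace ℝ E] [FiniteDimensional ℝ E]
    (Ω : Set E) (hΩ : IsOpen Ω) (X : E → E) (DX : E → (E →L[ℝ] E))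
    (hX : ∀ q ∈ Ω, HasFDerivAt X (DX q) q)
    (hC1 : ContinuousOn DX Ω)
    (σ : ℝ) (hσ0 : 0 < σ) (hσ1 : σ < 1 / 2)
    (p v : ℕ → E) (j : ℕ → ℕ)
    (hpΩ : ∀ k, p k ∈ Ω)
    (hXk : ∀ k, X (p k) ≠ 0)
    (hIU : ∀ k, IsUnit (DX (p k)))
    (hv : ∀ k, v k = -(Ring.inverse (DX (p k)) (X (p k))))
    (harmijo : ∀ k, (1 / 2 : ℝ) * ‖X (p k + ((1 / 2 : ℝ) ^ j k) • v k)‖ ^ 2 ≤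
        (1 / 2 : ℝ) * ‖X (p k)‖ ^ 2 - σ * (1 / 2 : ℝ) ^ j k * ‖X (p k)‖ ^ 2)
    (hleast : ∀ k, ∀ i < j k,
        ¬ ((1 / 2 : ℝ) * ‖X (p k + ((1 / 2 : ℝ) ^ i) • v k)‖ ^ 2 ≤
          (1 / 2 : ℝ) * ‖X (p k)‖ ^ 2 - σ * (1 / 2 : ℝ) ^ i * ‖X (p k)‖ ^ 2))
    (hrec : ∀ k, p (k + 1) = p k + ((1 / 2 : ℝ) ^ j k) • v k)
    (pbar : E) (hpbar : pbar ∈ Ω)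
    (φs : ℕ → ℕ) (hmono : StrictMono φs)
    (hacc : Filter.Tendsto (p ∘ φs) Filter.atTop (nhds pbar))
    (hinv : IsUnit (DX pbar))
    (L : ℝ) (hL : 0 < L) (δL : ℝ) (hδL : 0 < δL)
    (hLip : ∀ q ∈ Metric.ball pbar δL, ‖DX q - DX pbar‖ ≤ L * ‖q - pbar‖) :
    Filter.Tendsto p Filter.atTop (nhds pbar) ∧
      ∃ C > 0, ∃ k₀ : ℕ, ∀ k ≥ k₀, ‖p (k + 1) - pbar‖ ≤ C * ‖p k - pbar‖ ^ 2 :=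
  damped_newton_global_quadratic_convergence_general Ω hΩ X DX hX hC1 σ hσ0 hσ1 p v j hIU hv harmijo
    hleast hrec pbar hpbar φs hmono hacc hinv L hL δL hδL hLip
end

section
/- Let n ≥ 1, let a, b ∈ ℝ, and let P be an n×n real positive definite matrix. Then the function f₁(Q) = a · log(det Q) + b · trace(Q⁻¹), defined on n×n real matrices, is Fréchet differentiable at P with derivative V ↦ a · trace(P⁻¹ * V) − b · trace(P⁻¹ * V * P⁻¹); equivalently, its Euclidean (Frobenius) gradient at P is a · P⁻¹ − b · P⁻² = a P⁻¹ − b P⁻¹ P⁻¹. -/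
/-! Jacobi's formula: the determinant is multilinear in the rows, so its derivative at `1` sends
`V` to the sum of the determinants of `1` with one row replaced by the corresponding row of `V`,
i.e. to `trace V`. Since `det Q = det P * det (P⁻¹ * Q)`, the derivative of `log ∘ det` at `P` is
`V ↦ trace (P⁻¹ * V)`, and that of `Q ↦ Q⁻¹` is `V ↦ -P⁻¹ * V * P⁻¹`. The gradient form follows
from the symmetry of `P⁻¹` and the cyclicity of the trace. -/

open Matrix

attribute [local instance] Matrix.frobeniusSeminormedAddCommGroup
  Matrix.frobeniusNormedAddCommGroup Matrix.frobeniusNormedSpace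

attribute [local instance] Matrix.frobeniusNormedRing Matrix.frobeniusNormedAlgebra

namespace Matrix

variable {ι : Type*} [Fintype ι] {𝕜 : Type*} [RCLike 𝕜]

variable (ι 𝕜) in
noncomputable def traceCLM : Matrix ι ι 𝕜 →L[𝕜] 𝕜 :=
  LinearMap.toContinuousLinearMap (traceLinearMap ι 𝕜 𝕜)

variable [DecidableEq ι]

theorem det_updateRow_one {R : Type*} [CommRing R] (i : ι) (v : ι → R) :
    (updateRow (1 : Matrix ι ι R) i v).det = v i := by
  have hv : ∑ k, v k • (1 : Matrix ι ι R) k = v := by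
    ext j
    simp [one_apply]
  simpa [hv] using det_updateRow_sum (1 : Matrix ι ι R) i v

variable (ι) in
def detRowContinuousMultilinear (R : Type*) [CommRing R] [TopologicalSpace R]
    [IsTopologicalRing R] : ContinuousMultilinearMap R (fun _ : ι => ι → R) R :=
  { (detRowAlternating : (ι → R) [⋀^ι]→ₗ[R] R).toMultilinearMap with
    cont := continuous_id.matrix_det }

theorem hasFDerivAt_det_one : HasFDerivAt (det : Matrix ι ι 𝕜 → 𝕜) (traceCLM ι 𝕜) 1 := by
  let rows : Matrix ι ι 𝕜 →L[𝕜] (ι → ι → 𝕜) :=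
    LinearMap.toContinuousLinearMap (ofLinearEquiv 𝕜).symm.toLinearMap
  have hD : traceCLM ι 𝕜 = (detRowContinuousMultilinear ι 𝕜).linearDeriv (rows 1) ∘L rows := by
    ext V
    rw [ContinuousLinearMap.comp_apply, ContinuousMultilinearMap.linearDeriv_apply]
    exact Finset.sum_congr rfl fun i _ => (det_updateRow_one i (V i)).symm
  rw [hD]
  exact ((detRowContinuousMultilinear ι 𝕜).hasFDerivAt (rows 1)).comp 1 rows.hasFDerivAt

theorem hasFDerivAt_det {P : Matrix ι ι 𝕜} (hP : P.det ≠ 0) :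
    HasFDerivAt det (P.det • (traceCLM ι 𝕜 ∘L ContinuousLinearMap.mul 𝕜 _ P⁻¹)) P := by
  have hPP : P⁻¹ * P = 1 := nonsing_inv_mul P hP.isUnit
  have hdet_one : HasFDerivAt det (traceCLM ι 𝕜) (P⁻¹ * P) := hPP ▸ hasFDerivAt_det_one
  have hdet_mul := hdet_one.comp P (ContinuousLinearMap.mul 𝕜 _ P⁻¹).hasFDerivAt
  refine (hdet_mul.const_mul P.det).congr_of_eventuallyEq (.of_forall fun Q => ?_)
  show Q.det = P.det * (P⁻¹ * Q).det
  rw [det_mul, det_nonsing_inv, Ring.inverse_eq_inv, mul_inv_cancel_left₀ hP]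

theorem hasFDerivAt_inv {P : Matrix ι ι 𝕜} (hP : P.det ≠ 0) :
    HasFDerivAt (fun Q : Matrix ι ι 𝕜 => Q⁻¹)
      (-ContinuousLinearMap.mulLeftRight 𝕜 _ P⁻¹ P⁻¹) P := by
  obtain ⟨u, rfl⟩ : IsUnit P := (isUnit_iff_isUnit_det P).mpr hP.isUnit
  have h := hasFDerivAt_ringInverse (𝕜 := 𝕜) u
  rwa [coe_units_inv, ← funext nonsing_inv_eq_ringInverse] at h

theorem hasFDerivAt_log_det {P : Matrix ι ι ℝ} (hP : P.det ≠ 0) :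
    HasFDerivAt (fun Q => Real.log Q.det)
      (traceCLM ι ℝ ∘L ContinuousLinearMap.mul ℝ _ P⁻¹) P := by
  simpa [smul_smul, inv_mul_cancel₀ hP] using (hasFDerivAt_det hP).log hP

end Matrix

theorem f1_fderiv_general {n : ℕ} (a b : ℝ)
    (P : Matrix (Fin n) (Fin n) ℝ) (hP : P.PosDef) :
    ∃ L : Matrix (Fin n) (Fin n) ℝ →L[ℝ] ℝ,
      HasFDerivAt
        (fun Q : Matrix (Fin n) (Fin n) ℝ => a * Real.log Q.det + b * (Q⁻¹).trace)
        L P ∧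
      (∀ V : Matrix (Fin n) (Fin n) ℝ,
        L V = a * (P⁻¹ * V).trace - b * (P⁻¹ * V * P⁻¹).trace) ∧
      (∀ V : Matrix (Fin n) (Fin n) ℝ,
        L V = ((a • P⁻¹ - b • (P⁻¹ * P⁻¹))ᵀ * V).trace) := by
  have hdet : P.det ≠ 0 := hP.det_pos.ne'
  have hsymm : (P⁻¹)ᵀ = P⁻¹ := (isHermitian_iff_isSymm.mp hP.isHermitian).inv.eq
  have hL := ((hasFDerivAt_log_det hdet).const_mul a).add
    (((traceCLM _ ℝ).hasFDerivAt.comp P (hasFDerivAt_inv hdet)).const_mul b)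
  -- the left-hand side is what the derivative in `hL` evaluates to at `V`, definitionally
  have hLV : ∀ V, a * (P⁻¹ * V).trace + b * (-(P⁻¹ * V * P⁻¹)).trace
      = a * (P⁻¹ * V).trace - b * (P⁻¹ * V * P⁻¹).trace := fun V => by
    rw [trace_neg]
    ring
  refine ⟨_, hL, hLV, fun V => (hLV V).trans ?_⟩
  simp [hsymm, sub_mul, trace_mul_cycle P⁻¹ V P⁻¹]

/-- for `P` positive definite, `f₁(Q) = a log det Q + b tr Q⁻¹` is Fréchet
differentiable at `P` with derivative `V ↦ a tr(P⁻¹ V) - b tr(P⁻¹ V P⁻¹)`; equivalently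
its Euclidean (Frobenius) gradient at `P` is `a P⁻¹ - b P⁻¹ P⁻¹`. -/
theorem f1_fderiv {n : ℕ} (hn : 1 ≤ n) (a b : ℝ)
    (P : Matrix (Fin n) (Fin n) ℝ) (hP : P.PosDef) :
    ∃ L : Matrix (Fin n) (Fin n) ℝ →L[ℝ] ℝ,
      HasFDerivAt
        (fun Q : Matrix (Fin n) (Fin n) ℝ => a * Real.log Q.det + b * (Q⁻¹).trace)
        L P ∧
      (∀ V : Matrix (Fin n) (Fin n) ℝ,
        L V = a * (P⁻¹ * V).trace - b * (P⁻¹ * V * P⁻¹).trace) ∧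
      (∀ V : Matrix (Fin n) (Fin n) ℝ,
        L V = ((a • P⁻¹ - b • (P⁻¹ * P⁻¹))ᵀ * V).trace) :=
  f1_fderiv_general a b P hP
end

section
/- Let n ≥ 1 and let a, b > 0 be real numbers. Then for every n×n real positive definite matrix P, a · log(det P) + b · trace(P⁻¹) ≥ n · (a · log(b/a) + a), with equality if and only if P = (b/a) • I; that is, P₁* = (b/a) • I is the unique global minimizer of f₁(P) = a · log(det P) + b · trace(P⁻¹) over the cone of positive definite matrices. -/
/-!
Diagonalising `P`, the objective becomes `∑ᵢ g(λᵢ)` over the eigenvalues of `P`, where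
`g(x) = a log x + b / x`. With `t = b / (a x)` one has `g(x) - g(b / a) = a (t - 1 - log t) ≥ 0`,
with equality only at `t = 1`. So the sum is minimal exactly when every eigenvalue equals `b / a`,
i.e. when `P = (b / a) • 1`.
-/

open Finset Unitary

namespace Real

variable {a b x : ℝ}

lemma mul_log_add_div_sub_eq (ha : 0 < a) (hb : 0 < b) (hx : 0 < x) :
    a * log x + b / x - (a * log (b / a) + a) =
      a * (b / (a * x) - 1 - log (b / (a * x))) := by
  rw [log_div hb.ne' (mul_pos ha hx).ne', log_mul ha.ne' hx.ne', log_div hb.ne' ha.ne']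
  field_simp
  ring

lemma mul_log_div_add_le (ha : 0 < a) (hb : 0 < b) (hx : 0 < x) :
    a * log (b / a) + a ≤ a * log x + b / x := by
  have := log_le_sub_one_of_pos (show 0 < b / (a * x) by positivity)
  nlinarith [mul_log_add_div_sub_eq ha hb hx]

lemma mul_log_add_div_eq_iff (ha : 0 < a) (hb : 0 < b) (hx : 0 < x) :
    a * log x + b / x = a * log (b / a) + a ↔ x = b / a := by
  refine ⟨fun h ↦ ?_, fun h ↦ ?_⟩
  · by_contra hne
    have ht : b / (a * x) ≠ 1 := by
      rw [ne_eq, div_eq_one_iff_eq (by positivity)]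
      contrapose! hne
      field_simp
      linarith
    have := log_lt_sub_one_of_pos (show 0 < b / (a * x) by positivity) ht
    nlinarith [mul_log_add_div_sub_eq ha hb hx]
  · subst h
    field_simp

end Real

namespace Matrix

variable {𝕜 ι : Type*} [RCLike 𝕜] [Fintype ι] [DecidableEq ι]

lemma trace_conjStarAlgAut (U : unitary (Matrix ι ι 𝕜)) (M : Matrix ι ι 𝕜) :
    (conjStarAlgAut 𝕜 _ U M).trace = M.trace := by
  rw [conjStarAlgAut_apply, trace_mul_cycle, coe_star_mul_self, one_mul]

namespace IsHermitian

variable {A : Matrix ι ι 𝕜} (hA : A.IsHermitian)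

lemma inv_eq_conjStarAlgAut_diagonal (h : ∀ i, hA.eigenvalues i ≠ 0) :
    A⁻¹ = conjStarAlgAut 𝕜 _ hA.eigenvectorUnitary
      (diagonal (RCLike.ofReal ∘ (·⁻¹) ∘ hA.eigenvalues)) := by
  refine inv_eq_right_inv ?_
  refine (congrArg (· * _) hA.spectral_theorem).trans ?_
  rw [← map_mul, diagonal_mul_diagonal, ← map_one (conjStarAlgAut 𝕜 _ hA.eigenvectorUnitary),
    ← diagonal_one]
  congr 2 with i
  simp [h i]

lemma trace_inv_eq_sum_inv_eigenvalues (h : ∀ i, hA.eigenvalues i ≠ 0) :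
    A⁻¹.trace = ∑ i, ((hA.eigenvalues i)⁻¹ : 𝕜) := by
  rw [hA.inv_eq_conjStarAlgAut_diagonal h, trace_conjStarAlgAut, trace_diagonal]
  simp

lemma eigenvalues_eq_iff_eq_smul_one (c : ℝ) :
    (∀ i, hA.eigenvalues i = c) ↔ A = c • (1 : Matrix ι ι 𝕜) := by
  refine ⟨fun h ↦ ?_, fun h i ↦ ?_⟩
  · have hdiag : diagonal (RCLike.ofReal ∘ hA.eigenvalues) = algebraMap 𝕜 (Matrix ι ι 𝕜) c := by
      rw [algebraMap_eq_diagonal]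
      congr with i
      simp [h i]
    rw [hA.spectral_theorem, hdiag, AlgHomClass.commutes, Algebra.algebraMap_eq_smul_one,
      RCLike.real_smul_eq_coe_smul (K := 𝕜)]
  · subst h
    rw [hA.eigenvalues_eq, smul_mulVec, one_mulVec, dotProduct_smul, dotProduct_comm,
      ← EuclideanSpace.inner_eq_star_dotProduct, inner_self_eq_norm_sq_to_K,
      hA.eigenvectorBasis.orthonormal.1 i]
    simp [RCLike.smul_re]

end IsHermitian

lemma PosDef.mul_log_det_add_mul_trace_inv {P : Matrix ι ι ℝ} (hP : P.PosDef) (a b : ℝ) :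
    a * Real.log P.det + b * P⁻¹.trace =
      ∑ i, (a * Real.log (hP.1.eigenvalues i) + b / hP.1.eigenvalues i) := by
  have hne i : hP.1.eigenvalues i ≠ 0 := (hP.eigenvalues_pos i).ne'
  rw [hP.1.det_eq_prod_eigenvalues, hP.1.trace_inv_eq_sum_inv_eigenvalues hne]
  simp only [RCLike.ofReal_real_eq_id, id, Real.log_prod fun i _ ↦ hne i, mul_sum,
    ← sum_add_distrib, div_eq_mul_inv]

end Matrix

theorem f1_global_minimizer_general {n : ℕ} (a b : ℝ) (ha : 0 < a) (hb : 0 < b) :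
    ∀ P : Matrix (Fin n) (Fin n) ℝ, P.PosDef →
      (n : ℝ) * (a * Real.log (b / a) + a) ≤ a * Real.log P.det + b * (P⁻¹).trace ∧
      (a * Real.log P.det + b * (P⁻¹).trace = (n : ℝ) * (a * Real.log (b / a) + a) ↔
        P = (b / a) • (1 : Matrix (Fin n) (Fin n) ℝ)) := by
  intro P hP
  have hpos := hP.eigenvalues_pos
  have hmin : (n : ℝ) * (a * Real.log (b / a) + a) = ∑ _i : Fin n, (a * Real.log (b / a) + a) := by
    rw [sum_const, card_fin, nsmul_eq_mul]
  have hle : ∀ i ∈ univ, a * Real.log (b / a) + a ≤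
      a * Real.log (hP.1.eigenvalues i) + b / hP.1.eigenvalues i :=
    fun i _ ↦ Real.mul_log_div_add_le ha hb (hpos i)
  rw [hP.mul_log_det_add_mul_trace_inv, hmin, ← hP.1.eigenvalues_eq_iff_eq_smul_one]
  refine ⟨sum_le_sum hle, ?_⟩
  rw [eq_comm, sum_eq_sum_iff_of_le hle]
  simp only [mem_univ, true_implies, eq_comm (a := a * Real.log (b / a) + a),
    Real.mul_log_add_div_eq_iff ha hb (hpos _)]

/-- for `a, b > 0`, every positive definite `P` satisfies
`a log det P + b tr P⁻¹ ≥ n (a log (b/a) + a)`, with equality iff `P = (b/a) • I`;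
i.e. `(b/a) • I` is the unique global minimizer of `f₁` over the positive definite
cone. -/
theorem f1_global_minimizer {n : ℕ} (hn : 1 ≤ n) (a b : ℝ) (ha : 0 < a) (hb : 0 < b) :
    ∀ P : Matrix (Fin n) (Fin n) ℝ, P.PosDef →
      (n : ℝ) * (a * Real.log (b / a) + a) ≤ a * Real.log P.det + b * (P⁻¹).trace ∧
      (a * Real.log P.det + b * (P⁻¹).trace = (n : ℝ) * (a * Real.log (b / a) + a) ↔
        P = (b / a) • (1 : Matrix (Fin n) (Fin n) ℝ)) :=
  f1_global_minimizer_general a b ha hb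
end

section
/- Let n ≥ 1, let a, b ∈ ℝ, and let P be an n×n real positive definite matrix. Then the merit function φ₁(Q) = (1/2) · trace((a • I − b • Q⁻¹) * (a • I − b • Q⁻¹)), defined on n×n real matrices, is Fréchet differentiable at P with derivative V ↦ b · trace((a • I − b • P⁻¹) * P⁻¹ * V * P⁻¹); equivalently, with respect to the Riemannian metric ⟨U, V⟩_P = trace(V P⁻¹ U P⁻¹), its gradient at P is a b • I − b² • P⁻¹. -/
open Matrix

attribute [local instance] Matrix.frobeniusSeminormedAddCommGroup
  Matrix.frobeniusNormedAddCommGroup Matrix.frobeniusNormedSpace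

/-!
Inversion has derivative `V ↦ -P⁻¹ V P⁻¹` at an invertible `P`, so `g(Q) = a I - b Q⁻¹` has
derivative `V ↦ b P⁻¹ V P⁻¹`. By the product rule and cyclicity of the trace, `½ tr(g²)` has
derivative `V ↦ tr(g(P) g'(V)) = b tr(G P⁻¹ V P⁻¹)` with `G = g(P)`, and cyclicity once more
writes this as `⟨b G, V⟩_P`, so the Riemannian gradient is `b G = a b I - b² P⁻¹`.
-/

namespace Matrix

variable {m 𝕜 : Type*} [Fintype m] [DecidableEq m] [RCLike 𝕜]

/- Derivatives are given through their values: the Frobenius `NormedRing` structure needed for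
`mulLeftRight` and the product rule does not match the ambient instances syntactically. -/

theorem hasFDerivAt_inv_s16 {P : Matrix m m 𝕜} (hP : IsUnit P) :
    ∃ L : Matrix m m 𝕜 →L[𝕜] Matrix m m 𝕜,
      HasFDerivAt (fun Q : Matrix m m 𝕜 => Q⁻¹) L P ∧ ∀ V, L V = -(P⁻¹ * V * P⁻¹) := by
  let : NormedRing (Matrix m m 𝕜) := frobeniusNormedRing
  let : NormedAlgebra 𝕜 (Matrix m m 𝕜) := frobeniusNormedAlgebra
  obtain ⟨u, rfl⟩ := hP
  have hinv : (fun Q : Matrix m m 𝕜 => Q⁻¹) = Ring.inverse := funext nonsing_inv_eq_ringInverse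
  refine ⟨_, hinv ▸ hasFDerivAt_ringInverse (𝕜 := 𝕜) u, fun V => ?_⟩
  rw [coe_units_inv]
  rfl

theorem hasFDerivAt_smul_one_sub_smul_inv (a b : 𝕜) {P : Matrix m m 𝕜} (hP : IsUnit P) :
    ∃ L : Matrix m m 𝕜 →L[𝕜] Matrix m m 𝕜,
      HasFDerivAt (fun Q : Matrix m m 𝕜 => a • (1 : Matrix m m 𝕜) - b • Q⁻¹) L P ∧
        ∀ V, L V = b • (P⁻¹ * V * P⁻¹) := by
  obtain ⟨L, hL, hLV⟩ := hasFDerivAt_inv_s16 hP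
  refine ⟨_, (hasFDerivAt_const _ _).sub (hL.const_smul b), fun V => ?_⟩
  change 0 - b • L V = _
  rw [hLV, smul_neg, zero_sub, neg_neg]

theorem hasFDerivAt_half_trace_mul_self {E : Type*} [NormedAddCommGroup E] [NormedSpace 𝕜 E]
    {g : E → Matrix m m 𝕜} {g' : E →L[𝕜] Matrix m m 𝕜} {x : E} (hg : HasFDerivAt g g' x) :
    ∃ L : E →L[𝕜] 𝕜,
      HasFDerivAt (fun y => (1 / 2 : 𝕜) * (g y * g y).trace) L x ∧
        ∀ v, L v = (g x * g' v).trace := by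
  let : NormedRing (Matrix m m 𝕜) := frobeniusNormedRing
  let : NormedAlgebra 𝕜 (Matrix m m 𝕜) := frobeniusNormedAlgebra
  let T : Matrix m m 𝕜 →L[𝕜] 𝕜 := (traceLinearMap m 𝕜 𝕜).toContinuousLinearMap
  refine ⟨_, (T.hasFDerivAt.comp x (hg.mul' hg)).const_mul (1 / 2 : 𝕜), fun v => ?_⟩
  change (1 / 2 : 𝕜) * T (g x * g' v + g' v * g x) = _
  simp only [T, LinearMap.coe_toContinuousLinearMap', traceLinearMap_apply, trace_add,
    trace_mul_comm (g' v)]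
  ring

end Matrix

theorem phi1_fderiv_general {n : ℕ} (a b : ℝ)
    (P : Matrix (Fin n) (Fin n) ℝ) (hP : P.PosDef) :
    ∃ L : Matrix (Fin n) (Fin n) ℝ →L[ℝ] ℝ,
      HasFDerivAt
        (fun Q : Matrix (Fin n) (Fin n) ℝ =>
          (1 / 2 : ℝ) * ((a • (1 : Matrix (Fin n) (Fin n) ℝ) - b • Q⁻¹) *
            (a • (1 : Matrix (Fin n) (Fin n) ℝ) - b • Q⁻¹)).trace)
        L P ∧
      (∀ V : Matrix (Fin n) (Fin n) ℝ,
        L V = b * ((a • (1 : Matrix (Fin n) (Fin n) ℝ) - b • P⁻¹) *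
          P⁻¹ * V * P⁻¹).trace) ∧
      (∀ V : Matrix (Fin n) (Fin n) ℝ,
        L V = (V * P⁻¹ *
          ((a * b) • (1 : Matrix (Fin n) (Fin n) ℝ) - (b ^ 2) • P⁻¹) * P⁻¹).trace) := by
  obtain ⟨g', hg, hg'⟩ := hasFDerivAt_smul_one_sub_smul_inv a b hP.isUnit
  obtain ⟨L, hL, hLV⟩ := hasFDerivAt_half_trace_mul_self hg
  set G := a • (1 : Matrix (Fin n) (Fin n) ℝ) - b • P⁻¹
  have hLV' : ∀ V, L V = b * (G * P⁻¹ * V * P⁻¹).trace := fun V => calc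
    L V = (G * g' V).trace := hLV V
    _ = (G * (b • (P⁻¹ * V * P⁻¹))).trace := by rw [hg' V]
    _ = b * (G * P⁻¹ * V * P⁻¹).trace := by
      rw [Matrix.mul_smul, trace_smul, smul_eq_mul]
      simp only [mul_assoc]
  have hgrad : (a * b) • (1 : Matrix (Fin n) (Fin n) ℝ) - (b ^ 2) • P⁻¹ = b • G := by
    simp only [G, smul_sub, smul_smul]
    ring_nf
  refine ⟨L, hL, hLV', fun V => (hLV' V).trans ?_⟩
  rw [hgrad, Matrix.mul_smul, Matrix.smul_mul, trace_smul, smul_eq_mul, mul_assoc _ V,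
    trace_mul_comm, ← mul_assoc]

/-- for `P` positive definite, the merit function
`φ₁(Q) = ½ tr((a I - b Q⁻¹) (a I - b Q⁻¹))` is Fréchet differentiable at `P` with
derivative `V ↦ b tr((a I - b P⁻¹) P⁻¹ V P⁻¹)`; equivalently, with respect to the
affine-invariant metric `⟨U, V⟩_P = tr(V P⁻¹ U P⁻¹)`, its Riemannian gradient at `P`
is `a b I - b² P⁻¹`. -/
theorem phi1_fderiv {n : ℕ} (hn : 1 ≤ n) (a b : ℝ)
    (P : Matrix (Fin n) (Fin n) ℝ) (hP : P.PosDef) :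
    ∃ L : Matrix (Fin n) (Fin n) ℝ →L[ℝ] ℝ,
      HasFDerivAt
        (fun Q : Matrix (Fin n) (Fin n) ℝ =>
          (1 / 2 : ℝ) * ((a • (1 : Matrix (Fin n) (Fin n) ℝ) - b • Q⁻¹) *
            (a • (1 : Matrix (Fin n) (Fin n) ℝ) - b • Q⁻¹)).trace)
        L P ∧
      (∀ V : Matrix (Fin n) (Fin n) ℝ,
        L V = b * ((a • (1 : Matrix (Fin n) (Fin n) ℝ) - b • P⁻¹) *
          P⁻¹ * V * P⁻¹).trace) ∧
      (∀ V : Matrix (Fin n) (Fin n) ℝ,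
        L V = (V * P⁻¹ *
          ((a * b) • (1 : Matrix (Fin n) (Fin n) ℝ) - (b ^ 2) • P⁻¹) * P⁻¹).trace) :=
  phi1_fderiv_general a b P hP
end
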